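/- arXiv:2001.07260 — 6 statements merged into one kernel-verified Lean document; each statement's English description precedes it below -/
import Mathlib

section
/- For a weak composition a of length n that is weakly increasing, the key polynomial κ_a is quasisymmetric in x_1,...,x_n. -/
open scoped Classical

/-- A Kohnert move: take the rightmost cell of row `r` and move it down in its
column to the highest open row `r'` below (rows indexed from 1). Cells are `(row, column)`. -/
def KohnertMove (D D' : Finset (ℕ × ℕ)) : Prop :=
  ∃ r c r', (r, c) ∈ D ∧ (∀ c', (r, c') ∈ D → c' ≤ c) ∧
    1 ≤ r' ∧ r' < r ∧ (r', c) ∉ D ∧ (∀ r'', r' < r'' → r'' < r → (r'', c) ∈ D) ∧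
    D' = insert (r', c) (D.erase (r, c))

/-- The largest part of a weak composition. -/
def maxPart (a : List ℕ) : ℕ := a.foldr max 0

/-- Number of cells of a diagram in row `i`. -/
def rowWeight (D : Finset (ℕ × ℕ)) (i : ℕ) : ℕ :=
  (D.filter (fun p => p.1 = i)).card

/-- The weight of a diagram, as a finitely supported function recording the
number of cells in each row. -/
noncomputable def wtF (D : Finset (ℕ × ℕ)) : ℕ →₀ ℕ := ∑ p ∈ D, Finsupp.single p.1 1

/-- The exponent vector `x^a` of a weak composition `a` (1-based variables). -/
noncomputable def compFinsupp (a : List ℕ) : ℕ →₀ ℕ :=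
  ∑ i ∈ Finset.range a.length, Finsupp.single (i + 1) (a.getD i 0)

/-- The key (left-justified) diagram of a weak composition `a`. -/
def keyDiagram (a : List ℕ) : Finset (ℕ × ℕ) :=
  (Finset.Icc 1 a.length ×ˢ Finset.Icc 1 (maxPart a)).filter
    (fun p => p.2 ≤ a.getD (p.1 - 1) 0)

/-- The set of key Kohnert diagrams of `a`: all diagrams obtainable from the key
diagram of `a` by sequences of Kohnert moves. -/
noncomputable def KDset (a : List ℕ) : Finset (Finset (ℕ × ℕ)) :=
  ((Finset.Icc 1 a.length ×ˢ Finset.Icc 1 (maxPart a)).powerset).filter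
    (fun D => Relation.ReflTransGen KohnertMove (keyDiagram a) D)

/-- The key polynomial `κ_a = Σ_{D ∈ KD(a)} x^{wt(D)}`. -/
noncomputable def keyPoly (a : List ℕ) : MvPolynomial ℕ ℤ :=
  ∑ D ∈ KDset a, MvPolynomial.monomial (wtF D) (1 : ℤ)

/-- The ordered sequence of nonzero exponents of a monomial in `x_1, …, x_n`. -/
def nzSeq (n : ℕ) (μ : ℕ →₀ ℕ) : List ℕ :=
  ((List.range n).map (fun i => μ (i + 1))).filter (fun x => x ≠ 0)

/-- A polynomial is quasisymmetric in `x_1, …, x_n` if the coefficients of any two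
monomials (in those variables) agree whenever their ordered sequences of nonzero
exponents agree. -/
def IsQuasisymmetricIn (n : ℕ) (f : MvPolynomial ℕ ℤ) : Prop :=
  ∀ μ ν : ℕ →₀ ℕ, (∀ i ∈ μ.support, i ∈ Finset.Icc 1 n) →
    (∀ i ∈ ν.support, i ∈ Finset.Icc 1 n) →
    nzSeq n μ = nzSeq n ν → MvPolynomial.coeff μ f = MvPolynomial.coeff ν f

/-! ### Basic setup -/

/-- The bounding box. -/
def box (a : List ℕ) : Finset (ℕ × ℕ) := Finset.Icc 1 a.length ×ˢ Finset.Icc 1 (maxPart a)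

lemma mem_box {a : List ℕ} {p : ℕ × ℕ} :
    p ∈ box a ↔ (1 ≤ p.1 ∧ p.1 ≤ a.length) ∧ (1 ≤ p.2 ∧ p.2 ≤ maxPart a) := by
  simp [box, Finset.mem_product, Finset.mem_Icc]

/-- Number of cells in column `c` at rows `≥ s`. -/
noncomputable def colAbove (D : Finset (ℕ × ℕ)) (c s : ℕ) : ℕ :=
  (D.filter (fun p => p.2 = c ∧ s ≤ p.1)).card

/-- The dominance condition: adjacent columns have weakly decreasing upper counts. -/
def Dom (D : Finset (ℕ × ℕ)) : Prop :=
  ∀ c s, colAbove D (c + 2) s ≤ colAbove D (c + 1) s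

/-- The conjectural description of `KDset`. -/
noncomputable def Cset (a : List ℕ) : Finset (Finset (ℕ × ℕ)) :=
  (box a).powerset.filter
    (fun D => (∀ c, colAbove D c 0 = colAbove (keyDiagram a) c 0) ∧ Dom D)

lemma mem_Cset {a : List ℕ} {D : Finset (ℕ × ℕ)} :
    D ∈ Cset a ↔ D ⊆ box a ∧ (∀ c, colAbove D c 0 = colAbove (keyDiagram a) c 0) ∧ Dom D := by
  simp [Cset, Finset.mem_filter, Finset.mem_powerset, and_assoc]

lemma colAbove_insert (D : Finset (ℕ × ℕ)) (p : ℕ × ℕ) (hp : p ∉ D) (c s : ℕ) :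
    colAbove (insert p D) c s
      = colAbove D c s + (if p.2 = c ∧ s ≤ p.1 then 1 else 0) := by
  unfold colAbove
  rw [Finset.filter_insert]
  split
  · rw [Finset.card_insert_of_notMem (by simp [hp]), add_comm]
  · simp

lemma colAbove_erase (D : Finset (ℕ × ℕ)) (p : ℕ × ℕ) (hp : p ∈ D) (c s : ℕ) :
    colAbove (D.erase p) c s + (if p.2 = c ∧ s ≤ p.1 then 1 else 0) = colAbove D c s := by
  unfold colAbove
  rw [Finset.filter_erase]
  by_cases h : p.2 = c ∧ s ≤ p.1
  · rw [if_pos h, Finset.card_erase_add_one (by simp [hp, h])]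
  · rw [if_neg h, Finset.erase_eq_of_notMem (by simp [h]), add_zero]

lemma colAbove_move {D : Finset (ℕ × ℕ)} {p q : ℕ × ℕ} (hp : p ∈ D) (hq : q ∉ D)
    (c s : ℕ) :
    colAbove (insert q (D.erase p)) c s + (if p.2 = c ∧ s ≤ p.1 then 1 else 0)
      = colAbove D c s + (if q.2 = c ∧ s ≤ q.1 then 1 else 0) := by
  have hq' : q ∉ D.erase p := fun h => hq (Finset.mem_of_mem_erase h)
  rw [colAbove_insert _ _ hq', add_right_comm, colAbove_erase D p hp]

/-- Splitting a column count at a cutoff `r + 1`. -/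
lemma colAbove_split (D : Finset (ℕ × ℕ)) (c s r : ℕ) (h : s ≤ r + 1) :
    colAbove D c s
      = (D.filter (fun p => p.2 = c ∧ s ≤ p.1 ∧ p.1 ≤ r)).card + colAbove D c (r + 1) := by
  have hsplit : (D.filter (fun p => p.2 = c ∧ s ≤ p.1))
      = (D.filter (fun p => p.2 = c ∧ s ≤ p.1 ∧ p.1 ≤ r))
        ∪ (D.filter (fun p => p.2 = c ∧ r + 1 ≤ p.1)) := by
    ext p
    simp only [Finset.mem_filter, Finset.mem_union]
    constructor
    · rintro ⟨hp, hc, hs⟩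
      rcases le_or_gt p.1 r with h' | h'
      · exact Or.inl ⟨hp, hc, hs, h'⟩
      · exact Or.inr ⟨hp, hc, h'⟩
    · rintro (⟨hp, hc, hs, _⟩ | ⟨hp, hc, hs⟩)
      · exact ⟨hp, hc, hs⟩
      · exact ⟨hp, hc, by omega⟩
  have hdisj : Disjoint (D.filter (fun p => p.2 = c ∧ s ≤ p.1 ∧ p.1 ≤ r))
      (D.filter (fun p => p.2 = c ∧ r + 1 ≤ p.1)) := by
    rw [Finset.disjoint_left]
    rintro p hp hq
    simp only [Finset.mem_filter] at hp hq
    omega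
  unfold colAbove
  rw [hsplit, Finset.card_union_of_disjoint hdisj]

/-- Splitting a column count at row `s`. -/
lemma colAbove_succ (D : Finset (ℕ × ℕ)) (c s : ℕ) :
    colAbove D c s = colAbove D c (s + 1) + (if (s, c) ∈ D then 1 else 0) := by
  have h := colAbove_split D c s s (by omega)
  have h2 : (D.filter (fun p => p.2 = c ∧ s ≤ p.1 ∧ p.1 ≤ s))
      = (D.filter (fun p => p = (s, c))) := by
    ext p
    obtain ⟨x, y⟩ := p
    simp only [Finset.mem_filter, Prod.mk.injEq]
    constructor
    · rintro ⟨hp, h1, h2, h3⟩; exact ⟨hp, by omega, by omega⟩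
    · rintro ⟨hp, h1, h2⟩; exact ⟨hp, by omega, by omega, by omega⟩
  have h3 : (D.filter (fun p => p = (s, c))).card = (if (s, c) ∈ D then 1 else 0) := by
    rw [Finset.filter_eq']
    split <;> simp
  rw [h, h2, h3, add_comm]

/-- Upper bound tool: if all rows of counted cells lie in `R`, the count is `≤ R.card`. -/
lemma colAbove_le (D : Finset (ℕ × ℕ)) (c s : ℕ) (R : Finset ℕ)
    (h : ∀ p ∈ D, p.2 = c → s ≤ p.1 → p.1 ∈ R) : colAbove D c s ≤ R.card := by
  apply Finset.card_le_card_of_injOn Prod.fst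
  · intro p hp
    simp only [Finset.mem_coe, Finset.mem_filter] at hp
    exact h p hp.1 hp.2.1 hp.2.2
  · intro p hp q hq hpq
    simp only [Finset.coe_filter, Set.mem_setOf_eq] at hp hq
    obtain ⟨x, y⟩ := p; obtain ⟨z, w⟩ := q
    simp only at hpq
    simp only [Prod.mk.injEq]
    exact ⟨hpq, hp.2.1.trans hq.2.1.symm⟩

/-- Lower bound tool. -/
lemma le_colAbove (D : Finset (ℕ × ℕ)) (c s : ℕ) (R : Finset ℕ)
    (h : ∀ r ∈ R, s ≤ r ∧ (r, c) ∈ D) : R.card ≤ colAbove D c s := by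
  apply Finset.card_le_card_of_injOn (fun r => (r, c))
  · intro r hr
    simp only [Finset.mem_coe, Finset.mem_filter]
    exact ⟨(h r hr).2, by trivial, (h r hr).1⟩
  · intro r _ t _ hrt
    simpa using hrt

/-- The crucial strict inequality allowing a Kohnert move in column `c`. -/
lemma colAbove_lt_move {D : Finset (ℕ × ℕ)} {r c r' s : ℕ} (hD : Dom D) (hc : 1 ≤ c)
    (hrc : (r, c) ∈ D) (hrm : (r, c + 1) ∉ D)
    (hmid : ∀ r'', r' < r'' → r'' < r → (r'', c) ∈ D)
    (hs1 : r' < s) (hs2 : s ≤ r) :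
    colAbove D (c + 1) s < colAbove D c s := by
  obtain ⟨γ, rfl⟩ : ∃ γ, c = γ + 1 := ⟨c - 1, by omega⟩
  have hsp1 := colAbove_split D (γ + 1) s r (by omega)
  have hsp2 := colAbove_split D (γ + 2) s r (by omega)
  have hdom := hD γ (r + 1)
  have hlow : r + 1 - s ≤ (D.filter (fun p => p.2 = γ + 1 ∧ s ≤ p.1 ∧ p.1 ≤ r)).card := by
    have hcard : (Finset.Icc s r).card = r + 1 - s := by rw [Nat.card_Icc]
    rw [← hcard]
    apply Finset.card_le_card_of_injOn (fun t => (t, γ + 1))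
    · intro t ht
      simp only [Finset.mem_coe, Finset.mem_Icc] at ht
      simp only [Finset.mem_coe, Finset.mem_filter]
      refine ⟨?_, by trivial, ht.1, ht.2⟩
      rcases lt_or_ge t r with h' | h'
      · exact hmid t (by omega) h'
      · have : t = r := by omega
        subst this; exact hrc
    · intro x _ y _ hxy
      simpa using hxy
  have hup : (D.filter (fun p => p.2 = γ + 2 ∧ s ≤ p.1 ∧ p.1 ≤ r)).card ≤ r - s := by
    have hcard : ((Finset.Icc s r).erase r).card = r - s := by
      rw [Finset.card_erase_of_mem (by simp only [Finset.mem_Icc]; omega), Nat.card_Icc]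
      omega
    rw [← hcard]
    apply Finset.card_le_card_of_injOn Prod.fst
    · intro p hp
      simp only [Finset.mem_coe, Finset.mem_filter] at hp
      simp only [Finset.mem_coe, Finset.mem_erase, Finset.mem_Icc]
      refine ⟨fun h' => hrm ?_, hp.2.2.1, hp.2.2.2⟩
      have hpe : p = (r, γ + 2) := by
        obtain ⟨x, y⟩ := p
        simp only at h'
        simp only [Prod.mk.injEq]
        exact ⟨h', hp.2.1⟩
      rw [← hpe]
      exact hp.1
    · intro p hp q hq hpq
      simp only [Finset.coe_filter, Set.mem_setOf_eq] at hp hq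
      obtain ⟨x, y⟩ := p; obtain ⟨z, w⟩ := q
      simp only at hpq
      simp only [Prod.mk.injEq]
      exact ⟨hpq, hp.2.1.trans hq.2.1.symm⟩
  show colAbove D (γ + 2) s < colAbove D (γ + 1) s
  omega

/-! ### Forward direction: Kohnert moves preserve `Cset` -/

lemma kohnert_mem_Cset {a : List ℕ} {D D' : Finset (ℕ × ℕ)} (hD : D ∈ Cset a)
    (hm : KohnertMove D D') : D' ∈ Cset a := by
  obtain ⟨r, c, r', hp, hright, hr1, hrr, hq, hmid, hD'⟩ := hm
  rw [mem_Cset] at hD ⊢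
  obtain ⟨hbox, hcnt, hdom⟩ := hD
  have hpbox := mem_box.mp (hbox hp)
  have hc1 : 1 ≤ c := hpbox.2.1
  have hqD : ((r' : ℕ), c) ∉ D := hq
  have hqp : ((r' : ℕ), c) ≠ (r, c) := by simp; omega
  subst hD'
  have hmove : ∀ γ s, colAbove (insert (r', c) (D.erase (r, c))) γ s
      + (if c = γ ∧ s ≤ r then 1 else 0)
      = colAbove D γ s + (if c = γ ∧ s ≤ r' then 1 else 0) := by
    intro γ s
    exact colAbove_move hp hq γ s
  refine ⟨?_, ?_, ?_⟩
  · intro x hx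
    rcases Finset.mem_insert.mp hx with rfl | hx
    · rw [mem_box]
      exact ⟨⟨hr1, by omega⟩, hpbox.2⟩
    · exact hbox (Finset.mem_of_mem_erase hx)
  · intro γ
    have h := hmove γ 0
    have hr0 : 0 ≤ r := Nat.zero_le r
    rw [hcnt γ] at h
    by_cases hcg : c = γ
    · rw [if_pos ⟨hcg, Nat.zero_le _⟩, if_pos ⟨hcg, Nat.zero_le _⟩] at h
      omega
    · rw [if_neg (by tauto), if_neg (by tauto)] at h
      omega
  · intro γ s
    have e1 := hmove (γ + 1) s
    have e2 := hmove (γ + 2) s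
    have hd := hdom γ s
    by_cases hcase : c = γ + 1 ∧ r' < s ∧ s ≤ r
    · obtain ⟨rfl, hs1, hs2⟩ := hcase
      have hstrict : colAbove D (γ + 1 + 1) s < colAbove D (γ + 1) s :=
        colAbove_lt_move hdom hc1 hp (fun hcc => by have := hright _ hcc; omega) hmid hs1 hs2
      have hstrict' : colAbove D (γ + 2) s < colAbove D (γ + 1) s := hstrict
      split_ifs at e1 e2 <;> omega
    · split_ifs at e1 e2 <;> omega

lemma keyDiagram_subset_box (a : List ℕ) : keyDiagram a ⊆ box a := by
  intro p hp
  exact Finset.mem_of_mem_filter p hp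

lemma mem_keyDiagram {a : List ℕ} {p : ℕ × ℕ} :
    p ∈ keyDiagram a ↔ ((1 ≤ p.1 ∧ p.1 ≤ a.length) ∧ (1 ≤ p.2 ∧ p.2 ≤ maxPart a))
      ∧ p.2 ≤ a.getD (p.1 - 1) 0 := by
  unfold keyDiagram
  rw [Finset.mem_filter]
  constructor
  · rintro ⟨h1, h2⟩
    refine ⟨mem_box.mp h1, h2⟩
  · rintro ⟨h1, h2⟩
    exact ⟨mem_box.mpr h1, h2⟩

lemma keyDiagram_mem_Cset (a : List ℕ) : keyDiagram a ∈ Cset a := by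
  rw [mem_Cset]
  refine ⟨keyDiagram_subset_box a, fun _ => rfl, ?_⟩
  intro γ s
  apply Finset.card_le_card_of_injOn (fun p => (p.1, γ + 1))
  · intro p hp
    simp only [Finset.mem_coe, Finset.mem_filter] at hp
    obtain ⟨hp, hc, hs⟩ := hp
    rw [mem_keyDiagram] at hp
    simp only [Finset.mem_coe, Finset.mem_filter]
    refine ⟨?_, by trivial, hs⟩
    rw [mem_keyDiagram]
    dsimp only
    refine ⟨⟨hp.1.1, ⟨by omega, by omega⟩⟩, by omega⟩
  · intro p hp q hq hpq
    simp only [Finset.coe_filter, Set.mem_setOf_eq] at hp hq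
    obtain ⟨x, y⟩ := p; obtain ⟨z, w⟩ := q
    simp only [Prod.mk.injEq] at hpq ⊢
    exact ⟨hpq.1, hp.2.1.trans hq.2.1.symm⟩

lemma KDset_subset_Cset (a : List ℕ) : KDset a ⊆ Cset a := by
  intro D hD
  unfold KDset at hD
  rw [Finset.mem_filter] at hD
  obtain ⟨-, hreach⟩ := hD
  induction hreach with
  | refl => exact keyDiagram_mem_Cset a
  | tail _ hstep ih => exact kohnert_mem_Cset ih hstep

/-! ### Reverse direction: everything in `Cset` is reachable -/

/-- An up-closed subset of `Icc 1 n` is a top interval. -/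
lemma upset_eq_Icc {n : ℕ} {S : Finset ℕ} (hS : S ⊆ Finset.Icc 1 n)
    (hup : ∀ r ∈ S, r + 1 ≤ n → r + 1 ∈ S) : S = Finset.Icc (n + 1 - S.card) n := by
  rcases S.eq_empty_or_nonempty with rfl | hne
  · simp [Finset.Icc_eq_empty_of_lt]
  · set m := S.min' hne with hm
    have hmS : m ∈ S := S.min'_mem hne
    have hm1 : 1 ≤ m ∧ m ≤ n := by
      have := hS hmS
      rw [Finset.mem_Icc] at this
      exact this
    have hsub : S ⊆ Finset.Icc m n := by
      intro x hx
      rw [Finset.mem_Icc]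
      refine ⟨S.min'_le x hx, ?_⟩
      have := hS hx
      rw [Finset.mem_Icc] at this
      omega
    have hsup : Finset.Icc m n ⊆ S := by
      intro x hx
      rw [Finset.mem_Icc] at hx
      obtain ⟨h1, h2⟩ := hx
      induction x, h1 using Nat.le_induction with
      | base => exact hmS
      | succ t ht ih => exact hup t (ih (by omega)) h2
    have hSeq : S = Finset.Icc m n := Finset.Subset.antisymm hsub hsup
    rw [hSeq, Nat.card_Icc]
    congr 1
    omega

/-- The set of rows occupied in column `c`. -/
noncomputable def colSet (D : Finset (ℕ × ℕ)) (n c : ℕ) : Finset ℕ :=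
  (Finset.Icc 1 n).filter (fun r => (r, c) ∈ D)

lemma colSet_card {a : List ℕ} {D : Finset (ℕ × ℕ)} (hbox : D ⊆ box a) (c : ℕ) :
    (colSet D a.length c).card = colAbove D c 0 := by
  apply le_antisymm
  · apply le_colAbove
    intro r hr
    unfold colSet at hr
    rw [Finset.mem_filter] at hr
    exact ⟨Nat.zero_le _, hr.2⟩
  · apply colAbove_le
    intro p hp hc _
    unfold colSet
    rw [Finset.mem_filter]
    have hb := mem_box.mp (hbox hp)
    rw [Finset.mem_Icc]
    refine ⟨⟨hb.1.1, hb.1.2⟩, ?_⟩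
    have : p = (p.1, c) := by
      obtain ⟨x, y⟩ := p
      simp_all
    rw [← this]
    exact hp

lemma sorted_getD_mono {a : List ℕ} (h : a.Pairwise (· ≤ ·)) {i j : ℕ} (hij : i ≤ j)
    (hj : j < a.length) : a.getD i 0 ≤ a.getD j 0 := by
  rw [List.getD_eq_getElem a 0 (by omega), List.getD_eq_getElem a 0 hj]
  rcases eq_or_lt_of_le hij with rfl | hlt
  · exact le_refl _
  · exact List.pairwise_iff_getElem.mp h i j (by omega) hj hlt

/-- No holes and correct column counts force the key diagram. -/
lemma eq_key_of_no_hole {a : List ℕ} {D : Finset (ℕ × ℕ)} (hsort : a.Pairwise (· ≤ ·))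
    (hD : D ∈ Cset a)
    (hnh : ∀ p ∈ D, p.1 + 1 ≤ a.length → (p.1 + 1, p.2) ∈ D) : D = keyDiagram a := by
  rw [mem_Cset] at hD
  obtain ⟨hbox, hcnt, _⟩ := hD
  set n := a.length
  have hcol : ∀ c, colSet D n c = colSet (keyDiagram a) n c := by
    intro c
    have h1 : colSet D n c = Finset.Icc (n + 1 - (colSet D n c).card) n := by
      apply upset_eq_Icc (Finset.filter_subset _ _)
      intro r hr hrn
      rw [Finset.mem_filter] at hr ⊢
      rw [Finset.mem_Icc]
      exact ⟨⟨by omega, hrn⟩, hnh (r, c) hr.2 hrn⟩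
    have h2 : colSet (keyDiagram a) n c = Finset.Icc (n + 1 - (colSet (keyDiagram a) n c).card) n := by
      apply upset_eq_Icc (Finset.filter_subset _ _)
      intro r hr hrn
      rw [Finset.mem_filter] at hr ⊢
      rw [Finset.mem_Icc]
      refine ⟨⟨by omega, hrn⟩, ?_⟩
      rw [mem_keyDiagram] at hr ⊢
      obtain ⟨-, ⟨⟨hr1, hr2⟩, hcb⟩, hle⟩ := hr
      dsimp only
      refine ⟨⟨⟨by omega, hrn⟩, hcb⟩, ?_⟩
      calc c ≤ a.getD (r - 1) 0 := hle
        _ ≤ a.getD (r + 1 - 1) 0 := sorted_getD_mono hsort (by omega) (by omega)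
    have hc : (colSet D n c).card = (colSet (keyDiagram a) n c).card := by
      rw [colSet_card hbox, colSet_card (keyDiagram_subset_box a), hcnt]
    rw [h1, h2, hc]
  ext p
  obtain ⟨r, c⟩ := p
  have hmem : ∀ (E : Finset (ℕ × ℕ)), E ⊆ box a → ((r, c) ∈ E ↔ r ∈ colSet E n c) := by
    intro E hE
    unfold colSet
    rw [Finset.mem_filter]
    constructor
    · intro h
      have hb := mem_box.mp (hE h)
      rw [Finset.mem_Icc]
      exact ⟨hb.1, h⟩
    · exact fun h => h.2
  rw [hmem D hbox, hmem (keyDiagram a) (keyDiagram_subset_box a), hcol]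

/-- From any non-key element of `Cset` we can lift a cell one row up, staying in `Cset`,
and the lift is undone by a Kohnert move. -/
lemma lift_exists {a : List ℕ} {D : Finset (ℕ × ℕ)} (hsort : a.Pairwise (· ≤ ·))
    (hD : D ∈ Cset a) (hne : D ≠ keyDiagram a) :
    ∃ D', D' ∈ Cset a ∧ KohnertMove D' D ∧
      (∑ p ∈ D', (a.length - p.1)) + 1 = ∑ p ∈ D, (a.length - p.1) := by
  have hD0 := hD
  rw [mem_Cset] at hD0
  obtain ⟨hbox, hcnt, hdom⟩ := hD0
  set n := a.length with hn
  -- select the lifting cell: a maximal-row hole with minimal column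
  have hsel : ∃ r0 c0, (r0, c0) ∈ D ∧ r0 + 1 ≤ n ∧ (r0 + 1, c0) ∉ D ∧
      (∀ p ∈ D, p.1 + 1 ≤ n → (p.1 + 1, p.2) ∉ D → p.1 ≤ r0) ∧
      (∀ c, (r0, c) ∈ D → (r0 + 1, c) ∉ D → c0 ≤ c) := by
    set Hol := D.filter (fun p => p.1 + 1 ≤ n ∧ (p.1 + 1, p.2) ∉ D) with hHol
    have hHolmem : ∀ p, p ∈ Hol ↔ p ∈ D ∧ p.1 + 1 ≤ n ∧ (p.1 + 1, p.2) ∉ D := by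
      intro p
      rw [hHol, Finset.mem_filter]
    have hHolne : Hol.Nonempty := by
      rcases Finset.eq_empty_or_nonempty Hol with he | hne'
      · exfalso
        apply hne
        apply eq_key_of_no_hole hsort hD
        intro p hp hp1
        by_contra hcon
        have : p ∈ Hol := (hHolmem p).mpr ⟨hp, hp1, hcon⟩
        rw [he] at this
        exact absurd this (Finset.notMem_empty p)
      · exact hne'
    obtain ⟨pm, hpm, hpmax⟩ := Finset.exists_max_image Hol Prod.fst hHolne
    have hHne2 : (Hol.filter (fun p => p.1 = pm.1)).Nonempty := ⟨pm, Finset.mem_filter.mpr ⟨hpm, rfl⟩⟩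
    obtain ⟨pc, hpc, hpcmin⟩ := Finset.exists_min_image (Hol.filter (fun p => p.1 = pm.1))
      Prod.snd hHne2
    rw [Finset.mem_filter] at hpc
    obtain ⟨hpcH, hpc2⟩ := hpc
    obtain ⟨x, y⟩ := pc
    simp only at hpc2
    subst hpc2
    have hole0 := (hHolmem _).mp hpcH
    refine ⟨pm.1, y, hole0.1, hole0.2.1, hole0.2.2, ?_, ?_⟩
    · intro p hp h1 h2
      exact hpmax p ((hHolmem p).mpr ⟨hp, h1, h2⟩)
    · intro c hcD hcnot
      have hmem : (pm.1, c) ∈ Hol := (hHolmem _).mpr ⟨hcD, hole0.2.1, hcnot⟩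
      exact hpcmin (pm.1, c) (Finset.mem_filter.mpr ⟨hmem, rfl⟩)
  obtain ⟨r0, c0, hp0, hr0n, hq, hr0max, hminc⟩ := hsel
  have hp0box := mem_box.mp (hbox hp0)
  -- columns are up-closed above row r0
  have hup : ∀ c t, r0 < t → t + 1 ≤ n → (t, c) ∈ D → (t + 1, c) ∈ D := by
    intro c t ht htn htD
    by_contra hcon
    have := hr0max (t, c) htD htn hcon
    omega
  have hchain : ∀ c s, r0 < s → (s, c) ∈ D → ∀ t, s ≤ t → t ≤ n → (t, c) ∈ D := by
    intro c s hs hsD t hst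
    induction t, hst using Nat.le_induction with
    | base => exact fun _ => hsD
    | succ t ht ih => exact fun htn => hup c t (by omega) htn (ih (by omega))
  have hIcc1 : (Finset.Icc (r0 + 1) n).card = n - r0 := by rw [Nat.card_Icc]; omega
  have hG1 : ∀ c, colAbove D c (r0 + 1) ≤ n - r0 := by
    intro c
    rw [← hIcc1]
    apply colAbove_le
    intro p hp _ hs
    rw [Finset.mem_Icc]
    exact ⟨hs, (mem_box.mp (hbox hp)).1.2⟩
  have hG2 : ∀ c, (r0 + 1, c) ∈ D → n - r0 ≤ colAbove D c (r0 + 1) := by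
    intro c hc
    rw [← hIcc1]
    apply le_colAbove
    intro t ht
    rw [Finset.mem_Icc] at ht
    exact ⟨ht.1, hchain c (r0 + 1) (by omega) hc t ht.1 ht.2⟩
  have hG3 : ∀ c c', 1 ≤ c → c ≤ c' → colAbove D c' (r0 + 1) ≤ colAbove D c (r0 + 1) := by
    intro c c' hc hcc
    induction c', hcc using Nat.le_induction with
    | base => exact le_refl _
    | succ c' hc' ih =>
        have h2 : colAbove D (c' + 1) (r0 + 1) ≤ colAbove D c' (r0 + 1) := by
          obtain ⟨δ, rfl⟩ : ∃ δ, c' = δ + 1 := ⟨c' - 1, by omega⟩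
          exact hdom δ (r0 + 1)
        exact h2.trans ih
  have hG4 : colAbove D c0 (r0 + 1) ≤ n - r0 - 1 := by
    have hcard : (Finset.Icc (r0 + 2) n).card = n - r0 - 1 := by rw [Nat.card_Icc]; omega
    rw [← hcard]
    apply colAbove_le
    intro p hp hc hs
    rw [Finset.mem_Icc]
    have hb := mem_box.mp (hbox hp)
    refine ⟨?_, hb.1.2⟩
    rcases eq_or_lt_of_le hs with he | hlt
    · exfalso
      apply hq
      have hpp : p = (r0 + 1, c0) := by
        obtain ⟨x, y⟩ := p
        simp only [Prod.mk.injEq]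
        exact ⟨he.symm, hc⟩
      rwa [hpp] at hp
    · omega
  have hG5 : ∀ c', (r0 + 1, c') ∈ D → c' ≤ c0 := by
    intro c' hc'
    by_contra hgt
    have h1 := hG2 c' hc'
    have h2 := hG3 c0 c' hp0box.2.1 (by omega)
    omega
  have hqne : ((r0 + 1 : ℕ), c0) ∉ D.erase (r0, c0) := fun h => hq (Finset.mem_of_mem_erase h)
  have hmove : ∀ γ s, colAbove (insert (r0 + 1, c0) (D.erase (r0, c0))) γ s
      + (if c0 = γ ∧ s ≤ r0 then 1 else 0)
      = colAbove D γ s + (if c0 = γ ∧ s ≤ r0 + 1 then 1 else 0) := by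
    intro γ s
    exact colAbove_move hp0 hq γ s
  refine ⟨insert (r0 + 1, c0) (D.erase (r0, c0)), ?_, ?_, ?_⟩
  · rw [mem_Cset]
    refine ⟨?_, ?_, ?_⟩
    · intro x hx
      rcases Finset.mem_insert.mp hx with rfl | hx
      · rw [mem_box]
        exact ⟨⟨by omega, hr0n⟩, hp0box.2⟩
      · exact hbox (Finset.mem_of_mem_erase hx)
    · intro γ
      rw [← hcnt γ]
      have h := hmove γ 0
      split_ifs at h <;> omega
    · intro γ s
      have e1 := hmove (γ + 1) s
      have e2 := hmove (γ + 2) s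
      have hd := hdom γ s
      by_cases hcase : c0 = γ + 2 ∧ s = r0 + 1
      · obtain ⟨hc0e, rfl⟩ := hcase
        have hkey : colAbove D (γ + 2) (r0 + 1) + 1 ≤ colAbove D (γ + 1) (r0 + 1) := by
          by_cases hmemb : (r0, γ + 1) ∈ D
          · have hnothole : (r0 + 1, γ + 1) ∈ D := by
              by_contra hcon
              have := hminc (γ + 1) hmemb hcon
              omega
            have h2 := hG2 (γ + 1) hnothole
            rw [hc0e] at hG4
            omega
          · have hd0 := hdom γ r0
            have hsucc2 := colAbove_succ D (γ + 2) r0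
            have hsucc1 := colAbove_succ D (γ + 1) r0
            rw [if_pos (by rw [← hc0e]; exact hp0)] at hsucc2
            rw [if_neg hmemb] at hsucc1
            omega
        split_ifs at e1 e2 <;> omega
      · split_ifs at e1 e2 <;> omega
  · refine ⟨r0 + 1, c0, r0, Finset.mem_insert_self _ _, ?_, hp0box.1.1, by omega, ?_, ?_, ?_⟩
    · intro c' hc'
      rcases Finset.mem_insert.mp hc' with he | hmem
      · simp only [Prod.mk.injEq] at he
        omega
      · exact hG5 c' (Finset.mem_of_mem_erase hmem)
    · intro hcon
      rcases Finset.mem_insert.mp hcon with he | hmem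
      · simp only [Prod.mk.injEq] at he
        omega
      · exact (Finset.notMem_erase _ _) hmem
    · intro r'' h1 h2
      omega
    · rw [Finset.erase_insert hqne, Finset.insert_erase hp0]
  · have h1 : ∑ p ∈ D, (n - p.1) = (n - r0) + ∑ p ∈ D.erase (r0, c0), (n - p.1) := by
      conv_lhs => rw [← Finset.insert_erase hp0]
      rw [Finset.sum_insert (Finset.notMem_erase _ _)]
    have h2 : ∑ p ∈ insert (r0 + 1, c0) (D.erase (r0, c0)), (n - p.1)
        = (n - (r0 + 1)) + ∑ p ∈ D.erase (r0, c0), (n - p.1) := by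
      rw [Finset.sum_insert hqne]
    omega

lemma Cset_subset_KDset {a : List ℕ} (hsort : a.Pairwise (· ≤ ·)) : Cset a ⊆ KDset a := by
  have main : ∀ k (D : Finset (ℕ × ℕ)), D ∈ Cset a → (∑ p ∈ D, (a.length - p.1)) ≤ k →
      Relation.ReflTransGen KohnertMove (keyDiagram a) D := by
    intro k
    induction k with
    | zero =>
      intro D hD hk
      by_cases he : D = keyDiagram a
      · rw [he]
      · obtain ⟨D', _, _, hsum⟩ := lift_exists hsort hD he
        omega
    | succ k ih =>
      intro D hD hk
      by_cases he : D = keyDiagram a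
      · rw [he]
      · obtain ⟨D', hD', hmv, hsum⟩ := lift_exists hsort hD he
        exact (ih D' hD' (by omega)).tail hmv
  intro D hD
  unfold KDset
  rw [Finset.mem_filter, Finset.mem_powerset]
  have hbox : D ⊆ box a := (mem_Cset.mp hD).1
  exact ⟨hbox, main _ D hD (le_refl _)⟩

theorem KDset_eq_Cset {a : List ℕ} (hsort : a.Pairwise (· ≤ ·)) : KDset a = Cset a :=
  Finset.Subset.antisymm (KDset_subset_Cset a) (Cset_subset_KDset hsort)

/-! ### Counting coefficients -/

lemma wtF_apply (D : Finset (ℕ × ℕ)) (j : ℕ) :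
    wtF D j = (D.filter (fun p => p.1 = j)).card := by
  unfold wtF
  rw [Finsupp.finset_sum_apply]
  rw [Finset.card_filter]
  apply Finset.sum_congr rfl
  intro p _
  rw [Finsupp.single_apply]

lemma coeff_keyPoly (a : List ℕ) (μ : ℕ →₀ ℕ) :
    MvPolynomial.coeff μ (keyPoly a)
      = (((KDset a).filter (fun D => wtF D = μ)).card : ℤ) := by
  unfold keyPoly
  rw [MvPolynomial.coeff_sum]
  rw [Finset.card_filter]
  push_cast
  apply Finset.sum_congr rfl
  intro D _
  rw [MvPolynomial.coeff_monomial]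

/-! ### Row swaps -/

/-- Exchange rows `i` and `i+1` of a diagram. -/
noncomputable def swapRows (i : ℕ) (D : Finset (ℕ × ℕ)) : Finset (ℕ × ℕ) :=
  D.image (fun p => (Equiv.swap i (i + 1) p.1, p.2))

lemma swapRows_swapRows (i : ℕ) (D : Finset (ℕ × ℕ)) : swapRows i (swapRows i D) = D := by
  unfold swapRows
  rw [Finset.image_image]
  have : ((fun p : ℕ × ℕ => (Equiv.swap i (i + 1) p.1, p.2)) ∘
      fun p : ℕ × ℕ => (Equiv.swap i (i + 1) p.1, p.2)) = id := by
    funext p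
    simp [Function.comp]
  rw [this, Finset.image_id]

lemma swapRows_inj (i : ℕ) : Function.Injective (fun p : ℕ × ℕ => (Equiv.swap i (i + 1) p.1, p.2)) := by
  intro p q h
  simp only [Prod.mk.injEq] at h
  obtain ⟨h1, h2⟩ := h
  have := (Equiv.swap i (i + 1)).injective h1
  obtain ⟨x, y⟩ := p; obtain ⟨z, w⟩ := q
  simp_all

lemma mem_swapRows {i : ℕ} {D : Finset (ℕ × ℕ)} {p : ℕ × ℕ} :
    p ∈ swapRows i D ↔ (Equiv.swap i (i + 1) p.1, p.2) ∈ D := by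
  unfold swapRows
  rw [Finset.mem_image]
  constructor
  · rintro ⟨q, hq, rfl⟩
    simpa using hq
  · intro h
    exact ⟨(Equiv.swap i (i + 1) p.1, p.2), h, by simp⟩

lemma colAbove_swapRows (i : ℕ) (D : Finset (ℕ × ℕ)) (γ s : ℕ) (hs : s ≤ i ∨ i + 2 ≤ s) :
    colAbove (swapRows i D) γ s = colAbove D γ s := by
  unfold colAbove swapRows
  rw [Finset.filter_image, Finset.card_image_of_injective _ (swapRows_inj i)]
  congr 1
  apply Finset.filter_congr
  intro p _
  dsimp only
  have hiff : s ≤ (Equiv.swap i (i + 1)) p.1 ↔ s ≤ p.1 := by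
    rcases eq_or_ne p.1 i with he | h1
    · rw [he, Equiv.swap_apply_left]
      omega
    rcases eq_or_ne p.1 (i + 1) with he | h2
    · rw [he, Equiv.swap_apply_right]
      omega
    · rw [Equiv.swap_apply_of_ne_of_ne h1 h2]
  rw [hiff]

lemma colAbove_swapRows_mid (i : ℕ) (D : Finset (ℕ × ℕ)) (γ : ℕ) :
    colAbove (swapRows i D) γ (i + 1)
      = colAbove D γ (i + 2) + (if (i, γ) ∈ D then 1 else 0) := by
  unfold colAbove swapRows
  rw [Finset.filter_image, Finset.card_image_of_injective _ (swapRows_inj i)]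
  have hsplit : (D.filter (fun p => ((Equiv.swap i (i + 1) p.1, p.2).2 = γ
        ∧ i + 1 ≤ (Equiv.swap i (i + 1) p.1, p.2).1)))
      = (D.filter (fun p => p.2 = γ ∧ i + 2 ≤ p.1)) ∪ (D.filter (fun p => p = (i, γ))) := by
    ext p
    simp only [Finset.mem_filter, Finset.mem_union]
    have hsw : i + 1 ≤ (Equiv.swap i (i + 1)) p.1 ↔ (i + 2 ≤ p.1 ∨ p.1 = i) := by
      rcases eq_or_ne p.1 i with he | h1
      · rw [he, Equiv.swap_apply_left]
        omega
      rcases eq_or_ne p.1 (i + 1) with he | h2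
      · rw [he, Equiv.swap_apply_right]
        omega
      · rw [Equiv.swap_apply_of_ne_of_ne h1 h2]
        omega
    rw [hsw]
    constructor
    · rintro ⟨hp, hc, h2 | h2⟩
      · exact Or.inl ⟨hp, hc, h2⟩
      · right
        refine ⟨hp, ?_⟩
        obtain ⟨x, y⟩ := p
        simp only at h2 hc
        simp only [Prod.mk.injEq]
        exact ⟨h2, hc⟩
    · rintro (⟨hp, hc, h2⟩ | ⟨hp, h2⟩)
      · exact ⟨hp, hc, Or.inl h2⟩
      · subst h2
        exact ⟨hp, rfl, Or.inr rfl⟩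
  rw [hsplit, Finset.card_union_of_disjoint, Finset.filter_eq']
  · split_ifs <;> simp
  · rw [Finset.disjoint_left]
    rintro p hp hq
    simp only [Finset.mem_filter] at hp hq
    rcases hq with ⟨-, rfl⟩
    omega

lemma wtF_swapRows (i : ℕ) (D : Finset (ℕ × ℕ)) (j : ℕ) :
    wtF (swapRows i D) j = wtF D (Equiv.swap i (i + 1) j) := by
  rw [wtF_apply, wtF_apply]
  unfold swapRows
  rw [Finset.filter_image, Finset.card_image_of_injective _ (swapRows_inj i)]
  congr 1
  apply Finset.filter_congr
  intro p _
  constructor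
  · intro h
    rw [← h]
    rw [Equiv.swap_apply_self]
  · intro h
    rw [h, Equiv.swap_apply_self]

lemma row_empty_of_wtF {D : Finset (ℕ × ℕ)} {j : ℕ} (h : wtF D j = 0) :
    ∀ c, (j, c) ∉ D := by
  intro c hc
  rw [wtF_apply] at h
  rw [Finset.card_eq_zero] at h
  have : (j, c) ∈ D.filter (fun p => p.1 = j) := Finset.mem_filter.mpr ⟨hc, rfl⟩
  rw [h] at this
  exact absurd this (Finset.notMem_empty _)

lemma swapRows_mem_Cset {a : List ℕ} {i : ℕ} {D : Finset (ℕ × ℕ)}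
    (hi : 1 ≤ i) (hin : i + 1 ≤ a.length) (hD : D ∈ Cset a)
    (hrow : (∀ c, (i, c) ∉ D) ∨ (∀ c, (i + 1, c) ∉ D)) : swapRows i D ∈ Cset a := by
  rw [mem_Cset] at hD ⊢
  obtain ⟨hbox, hcnt, hdom⟩ := hD
  refine ⟨?_, ?_, ?_⟩
  · intro p hp
    rw [mem_swapRows] at hp
    have hb := mem_box.mp (hbox hp)
    rw [mem_box]
    refine ⟨?_, hb.2⟩
    have : (Equiv.swap i (i + 1) p.1 : ℕ) = Equiv.swap i (i + 1) p.1 := rfl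
    rcases eq_or_ne p.1 i with he | h1
    · omega
    rcases eq_or_ne p.1 (i + 1) with he | h2
    · omega
    · rw [Equiv.swap_apply_of_ne_of_ne h1 h2] at hb
      exact hb.1
  · intro γ
    rw [colAbove_swapRows i D γ 0 (Or.inl (by omega))]
    exact hcnt γ
  · intro γ s
    rcases (show s ≤ i ∨ s = i + 1 ∨ i + 2 ≤ s by omega) with hs | hs | hs
    · rw [colAbove_swapRows i D _ s (Or.inl hs), colAbove_swapRows i D _ s (Or.inl hs)]
      exact hdom γ s
    · subst hs
      rw [colAbove_swapRows_mid, colAbove_swapRows_mid]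
      rcases hrow with hrow | hrow
      · rw [if_neg (hrow _), if_neg (hrow _)]
        have := hdom γ (i + 2)
        omega
      · have e1 := colAbove_succ D (γ + 1) i
        have e2 := colAbove_succ D (γ + 2) i
        have e3 : colAbove D (γ + 1) (i + 1)
            = colAbove D (γ + 1) (i + 2) + (if (i + 1, γ + 1) ∈ D then 1 else 0) :=
          colAbove_succ D (γ + 1) (i + 1)
        have e4 : colAbove D (γ + 2) (i + 1)
            = colAbove D (γ + 2) (i + 2) + (if (i + 1, γ + 2) ∈ D then 1 else 0) :=
          colAbove_succ D (γ + 2) (i + 1)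
        rw [if_neg (hrow (γ + 1))] at e3
        rw [if_neg (hrow (γ + 2))] at e4
        have hd := hdom γ i
        by_cases hA : (i, γ + 1) ∈ D <;> by_cases hB : (i, γ + 2) ∈ D
        · rw [if_pos hA] at e1; rw [if_pos hB] at e2; rw [if_pos hB, if_pos hA]; omega
        · rw [if_pos hA] at e1; rw [if_neg hB] at e2; rw [if_neg hB, if_pos hA]; omega
        · rw [if_neg hA] at e1; rw [if_pos hB] at e2; rw [if_pos hB, if_neg hA]; omega
        · rw [if_neg hA] at e1; rw [if_neg hB] at e2; rw [if_neg hB, if_neg hA]; omega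
    · rw [colAbove_swapRows i D _ s (Or.inr hs), colAbove_swapRows i D _ s (Or.inr hs)]
      exact hdom γ s

lemma count_swap {a : List ℕ} {i : ℕ} (hi : 1 ≤ i) (hin : i + 1 ≤ a.length)
    {μ ν : ℕ →₀ ℕ} (hν : ∀ j, ν j = μ (Equiv.swap i (i + 1) j)) (hz : μ i = 0 ∨ μ (i + 1) = 0) :
    ((Cset a).filter (fun D => wtF D = μ)).card
      = ((Cset a).filter (fun D => wtF D = ν)).card := by
  have hwt : ∀ D : Finset (ℕ × ℕ), wtF D = μ → wtF (swapRows i D) = ν := by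
    intro D hD
    ext j
    rw [wtF_swapRows, hD, hν]
  have hrowof : ∀ D : Finset (ℕ × ℕ), wtF D = μ →
      ((∀ c, (i, c) ∉ D) ∨ (∀ c, (i + 1, c) ∉ D)) := by
    intro D hD
    rcases hz with h0 | h0
    · exact Or.inl (row_empty_of_wtF (by rw [hD]; exact h0))
    · exact Or.inr (row_empty_of_wtF (by rw [hD]; exact h0))
  apply Finset.card_bij (fun D _ => swapRows i D)
  · intro D hD
    rw [Finset.mem_filter] at hD ⊢
    exact ⟨swapRows_mem_Cset hi hin hD.1 (hrowof D hD.2), hwt D hD.2⟩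
  · intro D hD E hE h
    have := congrArg (swapRows i) h
    rwa [swapRows_swapRows, swapRows_swapRows] at this
  · intro E hE
    rw [Finset.mem_filter] at hE
    refine ⟨swapRows i E, ?_, swapRows_swapRows i E⟩
    rw [Finset.mem_filter]
    have hrowE : (∀ c, (i, c) ∉ E) ∨ (∀ c, (i + 1, c) ∉ E) := by
      rcases hz with h0 | h0
      · right
        apply row_empty_of_wtF
        rw [hE.2, hν, Equiv.swap_apply_right]
        exact h0
      · left
        apply row_empty_of_wtF
        rw [hE.2, hν, Equiv.swap_apply_left]
        exact h0
    refine ⟨swapRows_mem_Cset hi hin hE.1 hrowE, ?_⟩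
    ext j
    rw [wtF_swapRows, hE.2, hν, Equiv.swap_apply_self]

/-! ### List lemmas for `nzSeq` -/

lemma filter_eq_take {l : List ℕ} {k : ℕ} (h : ∀ j (hj : j < l.length), l[j] ≠ 0 ↔ j < k) :
    l.filter (fun x => x ≠ 0) = l.take k := by
  induction l generalizing k with
  | nil => simp
  | cons x t ih =>
    cases k with
    | zero =>
      have hx : x = 0 := by
        have := h 0 (by simp)
        simp only [List.getElem_cons_zero] at this
        omega
      have ht : t.filter (fun x => x ≠ 0) = t.take 0 := by
        apply ih
        intro j hj
        have := h (j + 1) (by simp; omega)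
        simp only [List.getElem_cons_succ] at this
        omega
      simp only [List.take_zero] at ht ⊢
      rw [List.filter_cons]
      rw [if_neg (by simp [hx])]
      exact ht
    | succ k =>
      have hx : x ≠ 0 := by
        have := h 0 (by simp)
        simp only [List.getElem_cons_zero] at this
        omega
      have ht : t.filter (fun x => x ≠ 0) = t.take k := by
        apply ih
        intro j hj
        have := h (j + 1) (by simp; omega)
        simp only [List.getElem_cons_succ] at this
        omega
      rw [List.filter_cons, if_pos (by simp [hx]), List.take_succ_cons, ht]

lemma nzSeq_swap {n i : ℕ} {μ ν : ℕ →₀ ℕ} (hi : 1 ≤ i) (hin : i + 1 ≤ n)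
    (hν : ∀ j, ν j = μ (Equiv.swap i (i + 1) j)) (hz : μ i = 0 ∨ μ (i + 1) = 0) :
    nzSeq n ν = nzSeq n μ := by
  unfold nzSeq
  have hswap : ∀ j, j ≠ i → j ≠ i + 1 → ν j = μ j := by
    intro j h1 h2
    rw [hν, Equiv.swap_apply_of_ne_of_ne h1 h2]
  have hνi : ν i = μ (i + 1) := by rw [hν, Equiv.swap_apply_left]
  have hνi1 : ν (i + 1) = μ i := by rw [hν, Equiv.swap_apply_right]
  obtain ⟨m, rfl⟩ : ∃ m, n = (i - 1) + 2 + m := ⟨n - i - 1, by omega⟩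
  rw [List.range_add, List.range_add]
  simp only [List.map_append, List.filter_append, List.map_map]
  have hr2 : List.range 2 = [0, 1] := by decide
  rw [hr2]
  have hhead : (List.range (i - 1)).map (fun t => ν (t + 1))
      = (List.range (i - 1)).map (fun t => μ (t + 1)) := by
    apply List.map_congr_left
    intro k hk
    rw [List.mem_range] at hk
    exact hswap (k + 1) (by omega) (by omega)
  have htail : (List.range m).map ((fun t => ν (t + 1)) ∘ fun x => i + 1 + x)
      = (List.range m).map ((fun t => μ (t + 1)) ∘ fun x => i + 1 + x) := by
    apply List.map_congr_left
    intro k hk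
    simp only [Function.comp]
    exact hswap _ (by omega) (by omega)
  simp only [List.map_cons, List.map_nil, Function.comp]
  have h1 : i - 1 + (0 : ℕ) + 1 = i := by omega
  have h2 : i - 1 + (1 : ℕ) + 1 = i + 1 := by omega
  rw [h1, h2, hνi, hνi1, hhead, htail]
  congr 1
  congr 1
  -- middle: filter [μ (i+1), μ i] = filter [μ i, μ (i+1)]
  rcases hz with h0 | h0 <;> rw [h0] <;> simp [List.filter_cons]

lemma packed_spec {n : ℕ} {μ : ℕ →₀ ℕ}
    (hp : ∀ i, 1 ≤ i → i + 1 ≤ n → μ i = 0 → μ (i + 1) = 0) :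
    ∃ k, k ≤ n ∧ nzSeq n μ = ((List.range n).map (fun t => μ (t + 1))).take k ∧
      (∀ j, j < n → (μ (j + 1) ≠ 0 ↔ j < k)) := by
  have hex : ∃ j, n ≤ j ∨ μ (j + 1) = 0 := ⟨n, Or.inl le_rfl⟩
  refine ⟨Nat.find hex, ?_, ?_, ?_⟩
  case _ =>
    by_contra hgt
    exact absurd (Or.inl le_rfl) (Nat.find_min hex (by omega))
  all_goals
    have hkn : Nat.find hex ≤ n := by
      by_contra hgt
      exact absurd (Or.inl le_rfl) (Nat.find_min hex (by omega))
  case _ =>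
    have hiff : ∀ j, j < n → (μ (j + 1) ≠ 0 ↔ j < Nat.find hex) := by
      intro j hj
      constructor
      · intro hne
        by_contra hge
        have hkn' : Nat.find hex < n := by omega
        have hbase : μ (Nat.find hex + 1) = 0 := by
          rcases Nat.find_spec hex with h | h
          · omega
          · exact h
        have hchain : ∀ t, Nat.find hex ≤ t → t < n → μ (t + 1) = 0 := by
          intro t ht
          induction t, ht using Nat.le_induction with
          | base => exact fun _ => hbase
          | succ t ht ih =>
            intro htn
            exact hp (t + 1) (by omega) (by omega) (ih (by omega))
        exact hne (hchain j (by omega) hj)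
      · intro hlt
        have := Nat.find_min hex hlt
        push_neg at this
        exact this.2
    unfold nzSeq
    apply filter_eq_take
    intro j hj
    simp only [List.length_map, List.length_range] at hj
    have hget : ((List.range n).map (fun t => μ (t + 1)))[j] = μ (j + 1) := by
      simp
    rw [hget]
    exact hiff j hj
  case _ =>
    intro j hj
    constructor
    · intro hne
      by_contra hge
      have hkn' : Nat.find hex < n := by omega
      have hbase : μ (Nat.find hex + 1) = 0 := by
        rcases Nat.find_spec hex with h | h
        · omega
        · exact h
      have hchain : ∀ t, Nat.find hex ≤ t → t < n → μ (t + 1) = 0 := by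
        intro t ht
        induction t, ht using Nat.le_induction with
        | base => exact fun _ => hbase
        | succ t ht ih =>
          intro htn
          exact hp (t + 1) (by omega) (by omega) (ih (by omega))
      exact hne (hchain j (by omega) hj)
    · intro hlt
      have := Nat.find_min hex hlt
      push_neg at this
      exact this.2

lemma packed_eq {n : ℕ} {μ ν : ℕ →₀ ℕ}
    (hμs : ∀ j ∈ μ.support, j ∈ Finset.Icc 1 n) (hνs : ∀ j ∈ ν.support, j ∈ Finset.Icc 1 n)
    (hμp : ∀ i, 1 ≤ i → i + 1 ≤ n → μ i = 0 → μ (i + 1) = 0)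
    (hνp : ∀ i, 1 ≤ i → i + 1 ≤ n → ν i = 0 → ν (i + 1) = 0)
    (heq : nzSeq n μ = nzSeq n ν) : μ = ν := by
  obtain ⟨k1, hk1, he1, hp1⟩ := packed_spec hμp
  obtain ⟨k2, hk2, he2, hp2⟩ := packed_spec hνp
  have hlen1 : (nzSeq n μ).length = k1 := by
    rw [he1, List.length_take]
    simp only [List.length_map, List.length_range]
    omega
  have hlen2 : (nzSeq n ν).length = k2 := by
    rw [he2, List.length_take]
    simp only [List.length_map, List.length_range]
    omega
  have hkk : k1 = k2 := by rw [← hlen1, ← hlen2, heq]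
  have hout : ∀ (ρ : ℕ →₀ ℕ), (∀ j ∈ ρ.support, j ∈ Finset.Icc 1 n) →
      ∀ j, (j = 0 ∨ n < j) → ρ j = 0 := by
    intro ρ hρ j hj
    by_contra hne
    have := hρ j (Finsupp.mem_support_iff.mpr hne)
    rw [Finset.mem_Icc] at this
    omega
  ext j
  rcases (show j = 0 ∨ n < j ∨ (1 ≤ j ∧ j ≤ n) by omega) with hj | hj | hj
  · rw [hout μ hμs j (Or.inl hj), hout ν hνs j (Or.inl hj)]
  · rw [hout μ hμs j (Or.inr hj), hout ν hνs j (Or.inr hj)]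
  · obtain ⟨t, rfl⟩ : ∃ t, j = t + 1 := ⟨j - 1, by omega⟩
    have htn : t < n := by omega
    rcases lt_or_ge t k1 with hlt | hge
    · have hμt : μ (t + 1) = (nzSeq n μ).getD t 0 := by
        rw [he1]
        rw [List.getD_eq_getElem _ _ (by
          simp only [List.length_take, List.length_map, List.length_range]
          omega)]
        simp [List.getElem_take]
      have hνt : ν (t + 1) = (nzSeq n ν).getD t 0 := by
        rw [he2]
        rw [List.getD_eq_getElem _ _ (by
          simp only [List.length_take, List.length_map, List.length_range]
          omega)]
        simp [List.getElem_take]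
      rw [hμt, hνt, heq]
    · have h1 : μ (t + 1) = 0 := by
        by_contra hne
        have := (hp1 t htn).mp hne
        omega
      have h2 : ν (t + 1) = 0 := by
        by_contra hne
        have := (hp2 t htn).mp hne
        omega
      rw [h1, h2]

/-! ### Main assembly -/

lemma swap_finsupp_facts {n i : ℕ} (μ : ℕ →₀ ℕ) (hi : 1 ≤ i) (hin : i + 1 ≤ n)
    (hs : ∀ j ∈ μ.support, j ∈ Finset.Icc 1 n) (h0 : μ i = 0) (h1 : μ (i + 1) ≠ 0) :
    let ν := Finsupp.equivMapDomain (Equiv.swap i (i + 1)) μ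
    (∀ j, ν j = μ (Equiv.swap i (i + 1) j)) ∧
      (∀ j ∈ ν.support, j ∈ Finset.Icc 1 n) ∧
      (∑ j ∈ ν.support, j) + 1 = ∑ j ∈ μ.support, j := by
  intro ν
  have hν : ∀ j, ν j = μ (Equiv.swap i (i + 1) j) := by
    intro j
    show Finsupp.equivMapDomain (Equiv.swap i (i + 1)) μ j = _
    rw [Finsupp.equivMapDomain_apply, Equiv.symm_swap]
  refine ⟨hν, ?_, ?_⟩
  · intro j hj
    rw [Finsupp.mem_support_iff, hν j] at hj
    have : Equiv.swap i (i + 1) j ∈ μ.support := Finsupp.mem_support_iff.mpr hj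
    have hIcc := hs _ this
    rw [Finset.mem_Icc] at hIcc ⊢
    rcases eq_or_ne j i with rfl | hne1
    · omega
    rcases eq_or_ne j (i + 1) with rfl | hne2
    · omega
    · rwa [Equiv.swap_apply_of_ne_of_ne hne1 hne2] at hIcc
  · have hsupp : ν.support = μ.support.image (Equiv.swap i (i + 1)) := by
      ext j
      rw [Finsupp.mem_support_iff, hν j, Finset.mem_image]
      constructor
      · intro h
        exact ⟨Equiv.swap i (i + 1) j, Finsupp.mem_support_iff.mpr h, Equiv.swap_apply_self _ _ _⟩
      · rintro ⟨t, ht, rfl⟩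
        rwa [Equiv.swap_apply_self, ← Finsupp.mem_support_iff]
    rw [hsupp, Finset.sum_image (fun x _ y _ h => (Equiv.swap i (i + 1)).injective h)]
    have hi1mem : i + 1 ∈ μ.support := Finsupp.mem_support_iff.mpr h1
    have himem : i ∉ μ.support := by
      rw [Finsupp.mem_support_iff]
      omega
    rw [← Finset.sum_erase_add _ _ hi1mem, ← Finset.sum_erase_add _ (fun j => j) hi1mem]
    have hcong : ∑ t ∈ μ.support.erase (i + 1), (Equiv.swap i (i + 1)) t
        = ∑ t ∈ μ.support.erase (i + 1), t := by
      apply Finset.sum_congr rfl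
      intro t ht
      rw [Finset.mem_erase] at ht
      have hti : t ≠ i := fun h => himem (h ▸ ht.2)
      rw [Equiv.swap_apply_of_ne_of_ne hti ht.1]
    rw [hcong, Equiv.swap_apply_right]
    omega

theorem count_eq_of_nzSeq (a : List ℕ) :
    ∀ k (μ ν : ℕ →₀ ℕ), (∀ j ∈ μ.support, j ∈ Finset.Icc 1 a.length) →
      (∀ j ∈ ν.support, j ∈ Finset.Icc 1 a.length) →
      nzSeq a.length μ = nzSeq a.length ν →
      (∑ j ∈ μ.support, j) + (∑ j ∈ ν.support, j) ≤ k →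
      ((Cset a).filter (fun D => wtF D = μ)).card = ((Cset a).filter (fun D => wtF D = ν)).card := by
  intro k
  induction k with
  | zero =>
    intro μ ν hμs hνs heq hk
    have hz : ∀ (ρ : ℕ →₀ ℕ), (∀ j ∈ ρ.support, j ∈ Finset.Icc 1 a.length) →
        (∑ j ∈ ρ.support, j) = 0 → ρ = 0 := by
      intro ρ hρ hsum
      ext j
      simp only [Finsupp.coe_zero, Pi.zero_apply]
      by_contra hne
      have hmem : j ∈ ρ.support := Finsupp.mem_support_iff.mpr hne
      have h1 := hρ j hmem
      rw [Finset.mem_Icc] at h1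
      have h2 : j ≤ ∑ j ∈ ρ.support, j :=
        Finset.single_le_sum (f := fun j => j) (fun _ _ => Nat.zero_le _) hmem
      omega
    rw [hz μ hμs (by omega), hz ν hνs (by omega)]
  | succ k ih =>
    intro μ ν hμs hνs heq hk
    by_cases hμ : ∃ i, 1 ≤ i ∧ i + 1 ≤ a.length ∧ μ i = 0 ∧ μ (i + 1) ≠ 0
    · obtain ⟨i, hi1, hin, h0, h1⟩ := hμ
      obtain ⟨hν, hνsupp, hνsum⟩ := swap_finsupp_facts μ hi1 hin hμs h0 h1
      have hstep := count_swap (a := a) hi1 hin hν (Or.inl h0)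
      rw [hstep]
      apply ih _ ν hνsupp hνs _ (by omega)
      rw [nzSeq_swap hi1 hin hν (Or.inl h0)]
      exact heq
    by_cases hν : ∃ i, 1 ≤ i ∧ i + 1 ≤ a.length ∧ ν i = 0 ∧ ν (i + 1) ≠ 0
    · obtain ⟨i, hi1, hin, h0, h1⟩ := hν
      obtain ⟨hν', hνsupp, hνsum⟩ := swap_finsupp_facts ν hi1 hin hνs h0 h1
      have hstep := count_swap (a := a) hi1 hin hν' (Or.inl h0)
      rw [hstep]
      apply ih μ _ hμs hνsupp _ (by omega)
      rw [nzSeq_swap hi1 hin hν' (Or.inl h0)]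
      exact heq
    · push_neg at hμ hν
      have : μ = ν := by
        apply packed_eq hμs hνs ?_ ?_ heq
        · intro i h1 h2 h3
          by_contra hc
          exact hc (hμ i h1 h2 h3)
        · intro i h1 h2 h3
          by_contra hc
          exact hc (hν i h1 h2 h3)
      rw [this]

/-- If the weak composition `a` is weakly increasing, then the key polynomial
`κ_a` is quasisymmetric in `x_1, …, x_n`. -/
theorem key_quasisymmetric_of_weakly_increasing (a : List ℕ)
    (h : a.Pairwise (· ≤ ·)) :
    IsQuasisymmetricIn a.length (keyPoly a) := by
  intro μ ν hμs hνs heq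
  rw [coeff_keyPoly, coeff_keyPoly, KDset_eq_Cset h]
  congr 1
  exact count_eq_of_nzSeq a ((∑ j ∈ μ.support, j) + (∑ j ∈ ν.support, j)) μ ν hμs hνs heq le_rfl
end

section
/- For a weak composition a of length n with no zero parts, the key polynomial κ_a is quasisymmetric in x_1,...,x_n; in fact every monomial x^{wt(D)} for D a key Kohnert diagram of a has positive exponent on each of x_1,...,x_n. -/
open scoped Classical

/-!
Column 1 of the key diagram of a composition without zero parts is full in rows `1, …, n`.
A Kohnert move only drops a cell into an empty row `r' ≥ 1`, so in a column whose rows `1, …, m`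
are all occupied it never empties one of those cells; hence every key Kohnert diagram keeps a cell in each row
`1, …, n`. Every monomial of `κ_a` is then positive in all of `x_1, …, x_n`, and such a monomial
is determined by its sequence of nonzero exponents.
-/

open Finset

lemma le_maxPart_of_mem {a : List ℕ} {x : ℕ} (hx : x ∈ a) : x ≤ maxPart a := by
  induction a with
  | nil => simp at hx
  | cons y t ih =>
    rcases List.mem_cons.mp hx with rfl | hx
    · exact le_max_left _ _
    · exact (ih hx).trans (le_max_right _ _)

lemma mem_keyDiagram_row_col_one {a : List ℕ} (h : ∀ x ∈ a, 0 < x) {i : ℕ}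
    (hi : i ∈ Icc 1 a.length) : (i, 1) ∈ keyDiagram a := by
  rw [mem_Icc] at hi
  have hlt : i - 1 < a.length := by omega
  have hget : a.getD (i - 1) 0 = a[i - 1] := List.getD_eq_getElem a 0 hlt
  have hpos : 0 < a[i - 1] := h _ (List.getElem_mem hlt)
  have hmax : a[i - 1] ≤ maxPart a := le_maxPart_of_mem (List.getElem_mem hlt)
  simp only [keyDiagram, mem_filter, mem_product, mem_Icc, hget]
  omega

lemma KohnertMove.mem_of_forall_mem_col {D D' : Finset (ℕ × ℕ)} (hmove : KohnertMove D D')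
    {m c : ℕ} (hD : ∀ i ∈ Icc 1 m, (i, c) ∈ D) : ∀ i ∈ Icc 1 m, (i, c) ∈ D' := by
  obtain ⟨r, c₀, r', -, -, hr', hr'r, hfree, -, rfl⟩ := hmove
  intro i hi
  -- the target cell `(r', c₀)` is empty, so if `c₀ = c` then `r'`, and hence `r`, lies below row `m`
  have hne : (i, c) ≠ (r, c₀) := by
    rintro ⟨rfl, rfl⟩
    exact hfree (hD r' (mem_Icc.mpr ⟨hr', by rw [mem_Icc] at hi; omega⟩))
  exact mem_insert_of_mem (mem_erase.mpr ⟨hne, hD i hi⟩)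

lemma mem_of_reflTransGen_kohnertMove {D D' : Finset (ℕ × ℕ)}
    (hDD' : Relation.ReflTransGen KohnertMove D D') {m c : ℕ}
    (hD : ∀ i ∈ Icc 1 m, (i, c) ∈ D) : ∀ i ∈ Icc 1 m, (i, c) ∈ D' := by
  induction hDD' with
  | refl => exact hD
  | tail _ hmove ih => exact hmove.mem_of_forall_mem_col ih

lemma rowWeight_pos_of_mem {D : Finset (ℕ × ℕ)} {i c : ℕ} (h : (i, c) ∈ D) :
    0 < rowWeight D i :=
  card_pos.mpr ⟨(i, c), mem_filter.mpr ⟨h, rfl⟩⟩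

lemma rowWeight_pos_of_mem_KDset {a : List ℕ} (h : ∀ x ∈ a, 0 < x) {D : Finset (ℕ × ℕ)}
    (hD : D ∈ KDset a) {i : ℕ} (hi : i ∈ Icc 1 a.length) : 0 < rowWeight D i := by
  have hreach := (mem_filter.mp hD).2
  exact rowWeight_pos_of_mem
    (mem_of_reflTransGen_kohnertMove hreach (fun j hj ↦ mem_keyDiagram_row_col_one h hj) i hi)

lemma wtF_apply_s2 (D : Finset (ℕ × ℕ)) (i : ℕ) : wtF D i = rowWeight D i := by
  rw [wtF, rowWeight, Finsupp.finsetSum_apply, card_eq_sum_ones, sum_filter]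
  exact sum_congr rfl fun p _ ↦ Finsupp.single_apply

lemma exists_mem_KDset_wtF_eq {a : List ℕ} {μ : ℕ →₀ ℕ} (hμ : μ ∈ (keyPoly a).support) :
    ∃ D ∈ KDset a, wtF D = μ := by
  rw [MvPolynomial.mem_support_iff, keyPoly, MvPolynomial.coeff_sum] at hμ
  obtain ⟨D, hD, hne⟩ := exists_ne_zero_of_sum_ne_zero hμ
  rw [MvPolynomial.coeff_monomial] at hne
  exact ⟨D, hD, of_not_not fun h ↦ hne (if_neg h)⟩

lemma nzSeq_eq_map_of_length_eq {n : ℕ} {μ : ℕ →₀ ℕ} (hlen : (nzSeq n μ).length = n) :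
    nzSeq n μ = (List.range n).map fun i ↦ μ (i + 1) :=
  List.filter_sublist.eq_of_length (by rw [List.length_map, List.length_range]; exact hlen)

lemma nzSeq_eq_map_of_pos {n : ℕ} {μ : ℕ →₀ ℕ} (hμ : ∀ i ∈ Icc 1 n, 0 < μ i) :
    nzSeq n μ = (List.range n).map fun i ↦ μ (i + 1) := by
  refine List.filter_eq_self.mpr fun x hx ↦ ?_
  obtain ⟨i, hi, rfl⟩ := List.mem_map.mp hx
  have := hμ (i + 1) (mem_Icc.mpr ⟨by omega, by rw [List.mem_range] at hi; omega⟩)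
  simpa using this.ne'

lemma eq_of_nzSeq_eq_of_pos {n : ℕ} {μ ν : ℕ →₀ ℕ} (hμs : ∀ i ∈ μ.support, i ∈ Icc 1 n)
    (hνs : ∀ i ∈ ν.support, i ∈ Icc 1 n) (hμ : ∀ i ∈ Icc 1 n, 0 < μ i)
    (hseq : nzSeq n μ = nzSeq n ν) : μ = ν := by
  have hμseq := nzSeq_eq_map_of_pos hμ
  have hνseq : nzSeq n ν = (List.range n).map fun i ↦ ν (i + 1) :=
    nzSeq_eq_map_of_length_eq (by rw [← hseq, hμseq, List.length_map, List.length_range])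
  have hcoord : ∀ i ∈ List.range n, μ (i + 1) = ν (i + 1) := by
    rw [← List.map_inj_left, ← hμseq, ← hνseq, hseq]
  ext j
  by_cases hj : j ∈ Icc 1 n
  · rw [mem_Icc] at hj
    simpa [Nat.sub_add_cancel hj.1] using hcoord (j - 1) (List.mem_range.mpr (by omega))
  · rw [Finsupp.notMem_support_iff.mp (mt (hμs j) hj), Finsupp.notMem_support_iff.mp (mt (hνs j) hj)]

lemma isQuasisymmetricIn_of_pos {n : ℕ} {f : MvPolynomial ℕ ℤ}
    (hf : ∀ μ ∈ f.support, ∀ i ∈ Icc 1 n, 0 < μ i) : IsQuasisymmetricIn n f := by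
  intro μ ν hμs hνs hseq
  by_cases hμ : μ ∈ f.support
  · rw [eq_of_nzSeq_eq_of_pos hμs hνs (hf μ hμ) hseq]
  by_cases hν : ν ∈ f.support
  · rw [eq_of_nzSeq_eq_of_pos hνs hμs (hf ν hν) hseq.symm]
  rw [MvPolynomial.notMem_support_iff.mp hμ, MvPolynomial.notMem_support_iff.mp hν]

/-- If `a` has no zero parts then `κ_a` is quasisymmetric in `x_1, …, x_n`; in
fact every key Kohnert diagram of `a` has a cell in each of the rows `1, …, n`. -/
theorem key_quasisymmetric_of_no_zero_parts (a : List ℕ)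
    (h : ∀ x ∈ a, 0 < x) :
    IsQuasisymmetricIn a.length (keyPoly a) ∧
      ∀ D ∈ KDset a, ∀ i ∈ Finset.Icc 1 a.length, 0 < rowWeight D i := by
  refine ⟨isQuasisymmetricIn_of_pos fun μ hμ i hi ↦ ?_,
    fun D hD i hi ↦ rowWeight_pos_of_mem_KDset h hD hi⟩
  obtain ⟨D, hD, rfl⟩ := exists_mem_KDset_wtF_eq hμ
  rw [wtF_apply_s2]
  exact rowWeight_pos_of_mem_KDset h hD hi
end

section
/- If a is a weakly increasing weak composition with an index i such that a_{i+1} > a_i > 0, then the lock polynomial 𝔏_a is not symmetric in x_1,...,x_n: 𝔏_a contains the monomial x^a but does not contain the monomial x^{s_i a}, where s_i a swaps parts a_i and a_{i+1}. -/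
open scoped Classical

/-- A labeled diagram is a finite set of triples `(row, column, label)`. The
underlying diagram forgets the labels. -/
def Tcells (T : Finset (ℕ × ℕ × ℕ)) : Finset (ℕ × ℕ) := T.image (fun t => (t.1, t.2.1))

/-- The weight of a labeled diagram records the number of cells in each row. -/
noncomputable def wtT (T : Finset (ℕ × ℕ × ℕ)) : ℕ →₀ ℕ := ∑ t ∈ T, Finsupp.single t.1 1

/-- Lock Kohnert tableau of content `a`: one label per cell; exactly one `i` in
each column from `max(a) - a_i + 1` through `max(a)`; entries in row `r` are at
least `r` (and labels lie in `1..n`); cells with a fixed label weakly descend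
from left to right; labels strictly decrease down columns. -/
def IsLKTF (a : List ℕ) (T : Finset (ℕ × ℕ × ℕ)) : Prop :=
  (∀ t ∈ T, ∀ t' ∈ T, t.1 = t'.1 → t.2.1 = t'.2.1 → t = t') ∧
  (∀ i ∈ Finset.Icc 1 a.length, ∀ c : ℕ,
      (T.filter (fun t => t.2.1 = c ∧ t.2.2 = i)).card =
        if maxPart a - a.getD (i - 1) 0 < c ∧ c ≤ maxPart a then 1 else 0) ∧
  (∀ t ∈ T, 1 ≤ t.1 ∧ t.1 ≤ t.2.2 ∧ 1 ≤ t.2.2 ∧ t.2.2 ≤ a.length) ∧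
  (∀ t ∈ T, ∀ t' ∈ T, t.2.2 = t'.2.2 → t.2.1 < t'.2.1 → t'.1 ≤ t.1) ∧
  (∀ t ∈ T, ∀ t' ∈ T, t.2.1 = t'.2.1 → t.1 < t'.1 → t.2.2 < t'.2.2)

/-- `flat(a)`: the nonzero parts of `a`, in order. -/
def flatC (a : List ℕ) : List ℕ := a.filter (fun x => x ≠ 0)

/-- The (finite) set of lock Kohnert tableaux of content `a`. -/
noncomputable def LKTset (a : List ℕ) : Finset (Finset (ℕ × ℕ × ℕ)) :=
  ((Finset.Icc 1 a.length ×ˢ Finset.Icc 1 (maxPart a) ×ˢ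
      Finset.Icc 1 a.length).powerset).filter (fun T => IsLKTF a T)

/-- The lock polynomial `𝔏_a = Σ_{T ∈ LKT(a)} x^{wt(T)}`. -/
noncomputable def lockPolyT (a : List ℕ) : MvPolynomial ℕ ℤ :=
  ∑ T ∈ LKTset a, MvPolynomial.monomial (wtT T) (1 : ℤ)

/-- A polynomial is symmetric in `x_1, …, x_n` if it is invariant under every
permutation of the variables `x_1, …, x_n` (fixing all other variables). -/
def IsSymmetricIn (n : ℕ) (f : MvPolynomial ℕ ℤ) : Prop :=
  ∀ σ : Equiv.Perm ℕ, (∀ i, i ∉ Finset.Icc 1 n → σ i = i) →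
    MvPolynomial.rename σ f = f

/-- `s_i a`: the list `a` with its (1-based) parts `a_i` and `a_{i+1}` swapped. -/
def swapParts (a : List ℕ) (i : ℕ) : List ℕ :=
  (a.set (i - 1) (a.getD i 0)).set i (a.getD (i - 1) 0)

/-!
An entry in row `r` is at least `r`, so the cells in rows below `i` are among the cells with
labels below `i`; if the row weights of a lock Kohnert tableau agree with `a` below row `i`,
counting forces equality, and every cell labelled `≥ i` lies in a row `≥ i`. The `i` of the last
column then sits in row `i`. A cell of row `i` with a label `j > i` would push, by the weak
descent of the `j`'s, the `j` of the last column into row `i` as well, onto the cell of that `i`.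
So row `i` holds at most `a_i` cells, which excludes the weight `s_i a`, whose `i`-th part is
`a_{i+1} > a_i`. The tableau filling row `r` with `r`'s gives `x^a`, and the transposition of
`x_i` and `x_{i+1}` carries `x^a` to `x^{s_i a}`.
-/

open Finset

lemma getD_le_maxPart (a : List ℕ) (k : ℕ) : a.getD k 0 ≤ maxPart a := by
  induction a generalizing k with
  | nil => simp [maxPart]
  | cons x l ih =>
    cases k with
    | zero => simp [maxPart]
    | succ k => exact (ih k).trans (le_max_right x _)

@[simp]
lemma compFinsupp_apply_zero (a : List ℕ) : compFinsupp a 0 = 0 := by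
  simp [compFinsupp, Finsupp.finsetSum_apply]

@[simp]
lemma compFinsupp_apply_succ (a : List ℕ) (r : ℕ) : compFinsupp a (r + 1) = a.getD r 0 := by
  rw [compFinsupp, Finsupp.finsetSum_apply]
  by_cases hr : r < a.length
  · rw [sum_eq_single r (fun k _ hk => by simp [hk])
      (fun h => absurd (mem_range.mpr hr) h)]
    simp
  · rw [List.getD_eq_default _ _ (not_lt.mp hr)]
    refine sum_eq_zero fun k hk => ?_
    rw [Finsupp.single_apply, if_neg (by simp at hk; omega)]

lemma swapParts_getD (a : List ℕ) {i : ℕ} (h1 : 1 ≤ i) (h2 : i < a.length) (k : ℕ) :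
    (swapParts a i).getD k 0 = a.getD (Equiv.swap (i - 1) i k) 0 := by
  simp only [swapParts, List.getD_eq_getElem?_getD, List.getElem?_set, List.length_set,
    Equiv.swap_apply_def]
  split_ifs <;> first | omega | (subst_vars; simp)

lemma compFinsupp_swapParts (a : List ℕ) {i : ℕ} (h1 : 1 ≤ i) (h2 : i < a.length) :
    compFinsupp (swapParts a i) = Finsupp.mapDomain (Equiv.swap i (i + 1)) (compFinsupp a) := by
  ext r
  rw [Finsupp.mapDomain_equiv_apply, Equiv.symm_swap]
  rcases r with _ | r
  · rw [Equiv.swap_apply_of_ne_of_ne (by omega) (by omega)]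
    simp
  · have : Equiv.swap i (i + 1) (r + 1) = Equiv.swap (i - 1) i r + 1 := by
      simp only [Equiv.swap_apply_def]
      split_ifs <;> omega
    rw [this, compFinsupp_apply_succ, compFinsupp_apply_succ, swapParts_getD a h1 h2]

lemma wtT_apply (T : Finset (ℕ × ℕ × ℕ)) (r : ℕ) : wtT T r = #{t ∈ T | t.1 = r} := by
  rw [wtT, Finsupp.finsetSum_apply, card_filter]
  simp only [Finsupp.single_apply]

lemma card_filter_lt_eq_sum {α : Type*} (s : Finset α) (f : α → ℕ) (k : ℕ) :
    #{x ∈ s | f x < k} = ∑ r ∈ range k, #{x ∈ s | f x = r} := by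
  rw [card_eq_sum_card_fiberwise (f := f) (t := range k)
    fun x hx => mem_range.mpr (mem_filter.mp hx).2]
  refine sum_congr rfl fun r hr => ?_
  rw [filter_filter]
  refine congrArg card (filter_congr fun x _ => ?_)
  exact ⟨fun h => h.2, fun h => ⟨h ▸ mem_range.mp hr, h⟩⟩

lemma coeff_lockPolyT (a : List ℕ) (m : ℕ →₀ ℕ) :
    MvPolynomial.coeff m (lockPolyT a) = #{T ∈ LKTset a | wtT T = m} := by
  rw [lockPolyT, MvPolynomial.coeff_sum, card_filter]
  push_cast
  refine sum_congr rfl fun T _ => ?_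
  rw [MvPolynomial.coeff_monomial]

namespace IsLKTF

variable {a : List ℕ} {T : Finset (ℕ × ℕ × ℕ)}

lemma col_mem_Ioc (hT : IsLKTF a T) {t : ℕ × ℕ × ℕ} (ht : t ∈ T) :
    t.2.1 ∈ Ioc (maxPart a - a.getD (t.2.2 - 1) 0) (maxPart a) := by
  obtain ⟨-, hcount, hbound, -⟩ := hT
  have hlab := hbound t ht
  have hpos : 0 < #{t' ∈ T | t'.2.1 = t.2.1 ∧ t'.2.2 = t.2.2} :=
    card_pos.mpr ⟨t, mem_filter.mpr ⟨ht, rfl, rfl⟩⟩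
  rw [hcount t.2.2 (mem_Icc.mpr ⟨hlab.2.2.1, hlab.2.2.2⟩)] at hpos
  split_ifs at hpos with h
  · exact mem_Ioc.mpr h
  · exact absurd hpos (lt_irrefl 0)

lemma card_filter_label (hT : IsLKTF a T) (j : ℕ) : #{t ∈ T | t.2.2 = j} = compFinsupp a j := by
  by_cases hj : j ∈ Icc 1 a.length
  · obtain ⟨j, rfl⟩ : ∃ j', j = j' + 1 := ⟨j - 1, by simp at hj; omega⟩
    rw [card_eq_sum_card_fiberwise (f := fun t => t.2.1)
      (t := Ioc (maxPart a - a.getD j 0) (maxPart a)) fun t ht => by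
      simpa [(mem_filter.mp ht).2] using hT.col_mem_Ioc (mem_filter.mp ht).1]
    have hcol : ∀ c ∈ Ioc (maxPart a - a.getD j 0) (maxPart a),
        #{t ∈ {t ∈ T | t.2.2 = j + 1} | t.2.1 = c} = 1 := fun c hc => by
      have h := hT.2.1 (j + 1) hj c
      rw [Nat.add_sub_cancel, if_pos (mem_Ioc.mp hc)] at h
      rw [filter_filter]
      exact (congrArg card (filter_congr fun t _ => and_comm)).trans h
    rw [sum_congr rfl hcol, sum_const, smul_eq_mul, mul_one, Nat.card_Ioc,
      compFinsupp_apply_succ]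
    have := getD_le_maxPart a j
    omega
  · have hnone : #{t ∈ T | t.2.2 = j} = 0 := card_eq_zero.mpr <| filter_eq_empty_iff.mpr
      fun t ht hl => hj (hl ▸ mem_Icc.mpr ⟨(hT.2.2.1 t ht).2.2.1, (hT.2.2.1 t ht).2.2.2⟩)
    rw [hnone]
    rcases j with _ | j
    · simp
    · rw [compFinsupp_apply_succ, List.getD_eq_default _ _ (by simp at hj; omega)]

lemma exists_mem_col_maxPart (hT : IsLKTF a T) {j : ℕ} (hj : 0 < compFinsupp a j) :
    ∃ t ∈ T, t.2.1 = maxPart a ∧ t.2.2 = j := by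
  obtain ⟨j, rfl⟩ : ∃ j', j = j' + 1 := ⟨j - 1, by rcases j with _ | j <;> simp_all⟩
  rw [compFinsupp_apply_succ] at hj
  have hjlen : j < a.length := by
    by_contra h
    rw [List.getD_eq_default _ _ (not_lt.mp h)] at hj
    exact lt_irrefl 0 hj
  have := getD_le_maxPart a j
  have hcount := hT.2.1 (j + 1) (mem_Icc.mpr ⟨by omega, by omega⟩) (maxPart a)
  rw [Nat.add_sub_cancel, if_pos ⟨by omega, le_rfl⟩] at hcount
  obtain ⟨t, ht⟩ := card_pos.mp (hcount ▸ Nat.one_pos)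
  exact ⟨t, (mem_filter.mp ht).1, (mem_filter.mp ht).2⟩

lemma row_le_label (hT : IsLKTF a T) {t : ℕ × ℕ × ℕ} (ht : t ∈ T) : t.1 ≤ t.2.2 :=
  (hT.2.2.1 t ht).2.1

lemma le_row_of_le_label (hT : IsLKTF a T) {i : ℕ}
    (hbelow : ∀ r < i, wtT T r = compFinsupp a r) {t : ℕ × ℕ × ℕ} (ht : t ∈ T)
    (hlab : i ≤ t.2.2) : i ≤ t.1 := by
  have hlow : {t ∈ T | t.2.2 < i} = {t ∈ T | t.1 < i} := by
    refine eq_of_subset_of_card_le (fun t ht => ?_) (le_of_eq ?_)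
    · rw [mem_filter] at ht ⊢
      exact ⟨ht.1, (hT.row_le_label ht.1).trans_lt ht.2⟩
    · calc #{t ∈ T | t.1 < i} = ∑ r ∈ range i, wtT T r := by
            simp only [card_filter_lt_eq_sum, wtT_apply]
        _ = ∑ r ∈ range i, compFinsupp a r :=
            sum_congr rfl fun r hr => hbelow r (mem_range.mp hr)
        _ = #{t ∈ T | t.2.2 < i} := by simp only [card_filter_lt_eq_sum, hT.card_filter_label]
  by_contra! h
  have := (mem_filter.mp (hlow ▸ mem_filter.mpr ⟨ht, h⟩ : t ∈ {t ∈ T | t.2.2 < i})).2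
  omega

lemma wtT_apply_le_of_forall_lt (hT : IsLKTF a T) {i : ℕ} (hi : 0 < compFinsupp a i)
    (hbelow : ∀ r < i, wtT T r = compFinsupp a r) : wtT T i ≤ compFinsupp a i := by
  obtain ⟨s, hs, hs_col, hs_lab⟩ := hT.exists_mem_col_maxPart hi
  have hs_row : s.1 = i :=
    le_antisymm (hs_lab ▸ hT.row_le_label hs) (hT.le_row_of_le_label hbelow hs hs_lab.ge)
  suffices hrow_i : ∀ t ∈ T, t.1 = i → t.2.2 = i by
    rw [wtT_apply, ← hT.card_filter_label i]
    exact card_le_card fun t ht =>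
      mem_filter.mpr ⟨(mem_filter.mp ht).1, hrow_i t (mem_filter.mp ht).1 (mem_filter.mp ht).2⟩
  intro t ht hrow
  by_contra hne
  have hlt : i < t.2.2 := lt_of_le_of_ne (hrow ▸ hT.row_le_label ht) (Ne.symm hne)
  have hcol : t.2.1 < maxPart a := by
    refine lt_of_le_of_ne (mem_Ioc.mp (hT.col_mem_Ioc ht)).2 fun h => hne ?_
    rw [hT.1 t ht s hs (hrow.trans hs_row.symm) (h.trans hs_col.symm), hs_lab]
  obtain ⟨u, hu, hu_col, hu_lab⟩ := hT.exists_mem_col_maxPart (j := t.2.2) <| by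
    rw [← hT.card_filter_label]
    exact card_pos.mpr ⟨t, mem_filter.mpr ⟨ht, rfl⟩⟩
  have hu_row : u.1 = i :=
    le_antisymm (hrow ▸ hT.2.2.2.1 t ht u hu hu_lab.symm (hu_col ▸ hcol))
      (hT.le_row_of_le_label hbelow hu (hu_lab ▸ hlt.le))
  have hus : u = s := hT.1 u hu s hs (hu_row.trans hs_row.symm) (hu_col.trans hs_col.symm)
  rw [← hu_lab, hus, hs_lab] at hlt
  exact lt_irrefl i hlt

end IsLKTF

def superstandardLKT (a : List ℕ) : Finset (ℕ × ℕ × ℕ) :=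
  {t ∈ Icc 1 a.length ×ˢ Icc 1 (maxPart a) ×ˢ Icc 1 a.length |
    t.2.2 = t.1 ∧ maxPart a - a.getD (t.1 - 1) 0 < t.2.1}

lemma mem_superstandardLKT {a : List ℕ} {t : ℕ × ℕ × ℕ} :
    t ∈ superstandardLKT a ↔ t.2.2 = t.1 ∧ t.1 ∈ Icc 1 a.length ∧
      t.2.1 ∈ Ioc (maxPart a - a.getD (t.1 - 1) 0) (maxPart a) := by
  simp only [superstandardLKT, mem_filter, mem_product, mem_Icc, mem_Ioc]
  omega

lemma isLKTF_superstandardLKT (a : List ℕ) : IsLKTF a (superstandardLKT a) := by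
  simp only [IsLKTF, mem_superstandardLKT, mem_Icc, mem_Ioc]
  refine ⟨?_, fun j hj c => ?_, ?_, ?_, ?_⟩
  · grind
  · split_ifs with h
    · refine card_eq_one.mpr ⟨(j, c, j), ?_⟩
      ext ⟨r, c', l⟩
      simp only [mem_filter, mem_superstandardLKT, mem_Icc, mem_Ioc, mem_singleton, Prod.mk.injEq]
      grind
    · refine card_eq_zero.mpr (filter_eq_empty_iff.mpr fun t ht hct => ?_)
      rw [mem_superstandardLKT, mem_Ioc] at ht
      grind
  · grind
  · grind
  · grind

lemma superstandardLKT_mem_LKTset (a : List ℕ) : superstandardLKT a ∈ LKTset a :=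
  mem_filter.mpr ⟨mem_powerset.mpr (filter_subset _ _), isLKTF_superstandardLKT a⟩

lemma wtT_superstandardLKT (a : List ℕ) : wtT (superstandardLKT a) = compFinsupp a := by
  ext r
  rw [wtT_apply, ← (isLKTF_superstandardLKT a).card_filter_label r]
  exact congrArg card (filter_congr fun t ht => by rw [(mem_superstandardLKT.mp ht).1])

lemma coeff_compFinsupp_lockPolyT_ne_zero (a : List ℕ) :
    MvPolynomial.coeff (compFinsupp a) (lockPolyT a) ≠ 0 := by
  rw [coeff_lockPolyT, Nat.cast_ne_zero, ← pos_iff_ne_zero, card_pos]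
  exact ⟨_, mem_filter.mpr ⟨superstandardLKT_mem_LKTset a, wtT_superstandardLKT a⟩⟩

lemma coeff_compFinsupp_swapParts_lockPolyT (a : List ℕ) {i : ℕ} (h1 : 1 ≤ i)
    (h2 : i < a.length) (h3 : 0 < a.getD (i - 1) 0) (h4 : a.getD (i - 1) 0 < a.getD i 0) :
    MvPolynomial.coeff (compFinsupp (swapParts a i)) (lockPolyT a) = 0 := by
  rw [coeff_lockPolyT, Nat.cast_eq_zero, card_eq_zero, filter_eq_empty_iff]
  intro T hT hwt
  have hswap : ∀ r, wtT T r = compFinsupp a (Equiv.swap i (i + 1) r) := fun r => by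
    rw [hwt, compFinsupp_swapParts a h1 h2, Finsupp.mapDomain_equiv_apply, Equiv.symm_swap]
  obtain ⟨i, rfl⟩ : ∃ i', i = i' + 1 := ⟨i - 1, by omega⟩
  have hle := (mem_filter.mp hT).2.wtT_apply_le_of_forall_lt (i := i + 1) (by simpa using h3)
    fun r hr => by rw [hswap, Equiv.swap_apply_of_ne_of_ne (by omega) (by omega)]
  rw [hswap, Equiv.swap_apply_left] at hle
  simp only [compFinsupp_apply_succ, Nat.add_sub_cancel] at hle h4
  omega

lemma not_isSymmetricIn_of_coeff {n : ℕ} {f : MvPolynomial ℕ ℤ} {σ : Equiv.Perm ℕ}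
    (hσ : ∀ k, k ∉ Icc 1 n → σ k = k) {m : ℕ →₀ ℕ}
    (hm : MvPolynomial.coeff m f ≠ 0)
    (hσm : MvPolynomial.coeff (Finsupp.mapDomain σ m) f = 0) : ¬ IsSymmetricIn n f := by
  intro hsymm
  rw [← hsymm σ hσ, MvPolynomial.coeff_rename_mapDomain σ σ.injective] at hσm
  exact hm hσm

theorem lock_not_symmetric_of_strict_increase_general (a : List ℕ) (i : ℕ)
    (h1 : 1 ≤ i) (h2 : i < a.length)
    (h3 : 0 < a.getD (i - 1) 0) (h4 : a.getD (i - 1) 0 < a.getD i 0) :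
    MvPolynomial.coeff (compFinsupp a) (lockPolyT a) ≠ 0 ∧
      MvPolynomial.coeff (compFinsupp (swapParts a i)) (lockPolyT a) = 0 ∧
      ¬ IsSymmetricIn a.length (lockPolyT a) := by
  have hx_a := coeff_compFinsupp_lockPolyT_ne_zero a
  have hx_sa := coeff_compFinsupp_swapParts_lockPolyT a h1 h2 h3 h4
  refine ⟨hx_a, hx_sa, not_isSymmetricIn_of_coeff (σ := Equiv.swap i (i + 1)) ?_ hx_a ?_⟩
  · intro k hk
    rw [mem_Icc] at hk
    exact Equiv.swap_apply_of_ne_of_ne (by omega) (by omega)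
  · rwa [← compFinsupp_swapParts a h1 h2]

/-- If `a` is weakly increasing with `a_{i+1} > a_i > 0` for some (1-based) `i`,
then `𝔏_a` contains the monomial `x^a` but not the monomial `x^{s_i a}`; in
particular `𝔏_a` is not symmetric in `x_1, …, x_n`. -/
theorem lock_not_symmetric_of_strict_increase (a : List ℕ) (i : ℕ)
    (hsort : a.Pairwise (· ≤ ·)) (h1 : 1 ≤ i) (h2 : i < a.length)
    (h3 : 0 < a.getD (i - 1) 0) (h4 : a.getD (i - 1) 0 < a.getD i 0) :
    MvPolynomial.coeff (compFinsupp a) (lockPolyT a) ≠ 0 ∧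
      MvPolynomial.coeff (compFinsupp (swapParts a i)) (lockPolyT a) = 0 ∧
      ¬ IsSymmetricIn a.length (lockPolyT a) :=
  lock_not_symmetric_of_strict_increase_general a i h1 h2 h3 h4
end

section
/- Each lock Kohnert diagram has a unique lock Kohnert tableau labeling: condition (1) determines the multiset of labels in each column and condition (4) determines their order, so for any lock Kohnert diagram D of content a there is at most one lock Kohnert tableau of content a with underlying diagram D. -/
open scoped Classical

/-!
In a lock Kohnert tableau, condition (1) fixes the set of labels occurring in each column in
terms of the content alone, and condition (4) makes the labels of a column strictly increasing in
the row index. Hence the label of a cell `(r, c)` is the element of that set whose rank equals the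
number of cells of column `c` below row `r`, which only depends on the underlying diagram.
-/

open Finset

section Rank

variable {α β γ : Type*} [LinearOrder β] [LinearOrder γ]

theorem strictMonoOn_card_filter_lt (s : Finset β) :
    StrictMonoOn (fun b => #{x ∈ s | x < b}) s := by
  intro i hi j _ hij
  refine card_lt_card ((ssubset_iff_of_subset ?_).2 ⟨i, by simp [mem_coe.1 hi, hij], by simp⟩)
  intro x
  simp only [mem_filter]
  exact fun ⟨hxs, hx⟩ => ⟨hxs, hx.trans hij⟩

theorem card_image_filter_lt_eq {s : Finset α} {f : α → β} {g : α → γ} (hf : Set.InjOn f s)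
    (hfg : ∀ x ∈ s, ∀ y ∈ s, f x < f y → g x < g y) {x : α} (hx : x ∈ s) :
    #{b ∈ s.image f | b < f x} = #{c ∈ s.image g | c < g x} := by
  have hlt : ∀ y ∈ s, g y < g x ↔ f y < f x := by
    refine fun y hy => ⟨fun h => ?_, hfg y hy x hx⟩
    rcases lt_trichotomy (f y) (f x) with hyx | hyx | hyx
    · exact hyx
    · exact absurd (hf hy hx hyx ▸ h) (lt_irrefl _)
    · exact absurd (hfg x hx y hy hyx) h.not_gt
  have hg : Set.InjOn g s := by
    intro y hy z hz hyz
    rcases lt_trichotomy (f y) (f z) with h | h | h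
    · exact absurd hyz (hfg y hy z hz h).ne
    · exact hf hy hz h
    · exact absurd hyz (hfg z hz y hy h).ne'
  rw [filter_image, filter_image,
    card_image_of_injOn (hf.mono (coe_subset.2 (filter_subset _ _))),
    card_image_of_injOn (hg.mono (coe_subset.2 (filter_subset _ _))), filter_congr hlt]

end Rank

def colLabels (T : Finset (ℕ × ℕ × ℕ)) (c : ℕ) : Finset ℕ :=
  {t ∈ T | t.2.1 = c}.image (·.2.2)

def colRows (D : Finset (ℕ × ℕ)) (c : ℕ) : Finset ℕ :=
  {p ∈ D | p.2 = c}.image Prod.fst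

theorem colRows_Tcells (T : Finset (ℕ × ℕ × ℕ)) (c : ℕ) :
    colRows (Tcells T) c = {t ∈ T | t.2.1 = c}.image (·.1) := by
  simp [colRows, Tcells, filter_image, image_image, Function.comp_def]

section IsLKTF

variable {a : List ℕ} {T : Finset (ℕ × ℕ × ℕ)}

theorem IsLKTF.mem_colLabels_iff (hT : IsLKTF a T) {c i : ℕ} :
    i ∈ colLabels T c ↔
      i ∈ Icc 1 a.length ∧ maxPart a - a.getD (i - 1) 0 < c ∧ c ≤ maxPart a := by
  have hcount : 0 < #{t ∈ T | t.2.1 = c ∧ t.2.2 = i} ↔ i ∈ colLabels T c := by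
    simp [card_pos, Finset.Nonempty, colLabels, and_assoc]
  rw [← hcount]
  by_cases hi : i ∈ Icc 1 a.length
  · rw [hT.2.1 i hi c]
    split_ifs <;> simp_all
  · refine iff_of_false (fun hpos => hi ?_) (fun h => hi h.1)
    obtain ⟨t, ht⟩ := card_pos.1 hpos
    rw [mem_filter] at ht
    obtain ⟨-, -, h1, h2⟩ := hT.2.2.1 t ht.1
    exact mem_Icc.2 ⟨ht.2.2 ▸ h1, ht.2.2 ▸ h2⟩

theorem IsLKTF.card_colLabels_lt_eq_card_colRows_lt (hT : IsLKTF a T) {r c i : ℕ}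
    (ht : (r, c, i) ∈ T) :
    #{j ∈ colLabels T c | j < i} = #{ρ ∈ colRows (Tcells T) c | ρ < r} := by
  rw [colRows_Tcells]
  refine (card_image_filter_lt_eq (s := {t ∈ T | t.2.1 = c}) (f := (·.1)) (g := (·.2.2))
    ?_ ?_ (x := (r, c, i)) (mem_filter.2 ⟨ht, rfl⟩)).symm
  · intro t ht t' ht' hrow
    rw [mem_coe, mem_filter] at ht ht'
    exact hT.1 t ht.1 t' ht'.1 hrow (ht.2.trans ht'.2.symm)
  · intro t ht t' ht'
    rw [mem_filter] at ht ht'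
    exact hT.2.2.2.2 t ht.1 t' ht'.1 (ht.2.trans ht'.2.symm)

theorem IsLKTF.subset_of_Tcells_eq {T' : Finset (ℕ × ℕ × ℕ)} (hT : IsLKTF a T)
    (hT' : IsLKTF a T') (h : Tcells T = Tcells T') : T ⊆ T' := by
  rintro ⟨r, c, i⟩ ht
  have hcell : (r, c) ∈ Tcells T' := h ▸ mem_image_of_mem _ ht
  obtain ⟨⟨r', c', i'⟩, ht', hcell⟩ := mem_image.1 hcell
  obtain ⟨rfl, rfl⟩ := Prod.mk.inj hcell.symm
  have hL : colLabels T c = colLabels T' c := by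
    ext j
    rw [hT.mem_colLabels_iff, hT'.mem_colLabels_iff]
  have hi : i ∈ colLabels T c := mem_image.2 ⟨_, mem_filter.2 ⟨ht, rfl⟩, rfl⟩
  have hi' : i' ∈ colLabels T c := hL ▸ mem_image.2 ⟨_, mem_filter.2 ⟨ht', rfl⟩, rfl⟩
  have hrank : #{j ∈ colLabels T c | j < i} = #{j ∈ colLabels T c | j < i'} := by
    rw [hT.card_colLabels_lt_eq_card_colRows_lt ht, hL,
      hT'.card_colLabels_lt_eq_card_colRows_lt ht', h]
  rwa [(strictMonoOn_card_filter_lt _).injOn hi hi' hrank]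

end IsLKTF

/-- A lock Kohnert diagram admits at most one lock Kohnert tableau labeling:
two lock Kohnert tableaux of content `a` with the same underlying diagram coincide. -/
theorem lkt_labeling_unique (a : List ℕ) (T T' : Finset (ℕ × ℕ × ℕ))
    (hT : IsLKTF a T) (hT' : IsLKTF a T') (h : Tcells T = Tcells T') :
    T = T' :=
  (hT.subset_of_Tcells_eq hT' h).antisymm (hT'.subset_of_Tcells_eq hT h.symm)
end

section
/- If a Kohnert move applied to a lock Kohnert diagram of content a yields a diagram D', then D' admits a (necessarily unique) lock Kohnert tableau labeling of content a; equivalently, the set of underlying diagrams of lock Kohnert tableaux of content a is closed under Kohnert moves and equals the set of lock Kohnert diagrams of a. -/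
/-!
A Kohnert move on the diagram of a lock Kohnert tableau lifts to the tableau: slide the moved
segment of the column down by one row, keeping its labels. The only condition at stake is the
weak descent of equal labels, and it survives because a label of the segment reappearing further
right in the same row would propagate up the segment and put a cell to the right of the moved
one in its row.

Conversely, if some label exceeds its row, raising the leftmost such cell of the topmost such
row gives a tableau from which a Kohnert move leads back, with smaller total displacement
`∑ (label - row)`. A tableau of displacement zero has every label equal to its row, and its
diagram is the lock diagram.
-/

open scoped Classical

/-- The lock (right-justified) diagram of a weak composition `a`. -/
def lockDiagram (a : List ℕ) : Finset (ℕ × ℕ) :=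
  (Finset.Icc 1 a.length ×ˢ Finset.Icc 1 (maxPart a)).filter
    (fun p => maxPart a - a.getD (p.1 - 1) 0 < p.2)

/-- The set of lock Kohnert diagrams of `a`: all diagrams obtainable from the
lock diagram of `a` by sequences of Kohnert moves. -/
noncomputable def LDset (a : List ℕ) : Finset (Finset (ℕ × ℕ)) :=
  ((Finset.Icc 1 a.length ×ˢ Finset.Icc 1 (maxPart a)).powerset).filter
    (fun D => Relation.ReflTransGen KohnertMove (lockDiagram a) D)

/-- The lock polynomial `𝔏_a = Σ_{D} x^{wt(D)}` over lock Kohnert diagrams of `a`. -/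
noncomputable def lockPoly (a : List ℕ) : MvPolynomial ℕ ℤ :=
  ∑ D ∈ LDset a, MvPolynomial.monomial (wtF D) (1 : ℤ)

lemma mem_Tcells {T : Finset (ℕ × ℕ × ℕ)} {j k : ℕ} :
    (j, k) ∈ Tcells T ↔ ∃ t ∈ T, t.1 = j ∧ t.2.1 = k := by
  simp [Tcells]

lemma mem_lockDiagram {a : List ℕ} {p : ℕ × ℕ} : p ∈ lockDiagram a ↔
    1 ≤ p.1 ∧ p.1 ≤ a.length ∧ maxPart a - a.getD (p.1 - 1) 0 < p.2 ∧ p.2 ≤ maxPart a := by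
  simp only [lockDiagram, Finset.mem_filter, Finset.mem_product, Finset.mem_Icc]
  omega

def moveRows (ρ : ℕ → ℕ → ℕ) (T : Finset (ℕ × ℕ × ℕ)) : Finset (ℕ × ℕ × ℕ) :=
  T.image fun t => (ρ t.1 t.2.1, t.2)

lemma Tcells_moveRows (ρ : ℕ → ℕ → ℕ) (T : Finset (ℕ × ℕ × ℕ)) :
    Tcells (moveRows ρ T) = (Tcells T).image fun p => (ρ p.1 p.2, p.2) := by
  simp only [Tcells, moveRows, Finset.image_image]
  rfl

def shiftDownBlock (r' r c : ℕ) (j k : ℕ) : ℕ := if k = c ∧ r' < j ∧ j ≤ r then j - 1 else j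

def raiseCell (x c : ℕ) (j k : ℕ) : ℕ := if j = x ∧ k = c then x + 1 else j

lemma insert_erase_eq_image_shiftDownBlock {D : Finset (ℕ × ℕ)} {r c r' : ℕ} (hr : r' < r)
    (hrc : (r, c) ∈ D) (hbetween : ∀ j, r' < j → j < r → (j, c) ∈ D) :
    insert (r', c) (D.erase (r, c)) = D.image fun p => (shiftDownBlock r' r c p.1 p.2, p.2) := by
  have hblock : ∀ j, r' < j → j ≤ r → (j, c) ∈ D := fun j hj hj' =>
    (lt_or_eq_of_le hj').elim (hbetween j hj) (· ▸ hrc)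
  ext ⟨j, k⟩
  simp only [Finset.mem_insert, Finset.mem_erase, ne_eq, Finset.mem_image, Prod.mk.injEq,
    Prod.exists, shiftDownBlock]
  constructor
  · rintro (⟨hj, hk⟩ | ⟨hne, hmem⟩)
    · refine ⟨j + 1, k, hk ▸ hblock _ (by omega) (by omega), ?_, rfl⟩
      rw [if_pos (by omega)]; simp
    · by_cases hb : k = c ∧ r' < j ∧ j < r
      · refine ⟨j + 1, k, hb.1 ▸ hblock _ (by omega) (by omega), ?_, rfl⟩
        rw [if_pos (by omega)]; simp
      · exact ⟨j, k, hmem, by rw [if_neg (by omega)], rfl⟩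
  · rintro ⟨j₀, k₀, hmem, hj, rfl⟩
    split_ifs at hj with hb
    · by_cases hj₀ : j₀ = r' + 1
      · left; omega
      · refine Or.inr ⟨by omega, ?_⟩
        rw [← hj, hb.1]
        exact hblock _ (by omega) (by omega)
    · exact Or.inr ⟨by omega, hj ▸ hmem⟩

lemma image_raiseCell {D : Finset (ℕ × ℕ)} {x c : ℕ} (hxc : (x, c) ∈ D) :
    D.image (fun p => (raiseCell x c p.1 p.2, p.2)) = insert (x + 1, c) (D.erase (x, c)) := by
  ext ⟨j, k⟩
  simp only [Finset.mem_insert, Finset.mem_erase, ne_eq, Finset.mem_image, Prod.mk.injEq,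
    Prod.exists, raiseCell]
  constructor
  · rintro ⟨j₀, k₀, hmem, hj, rfl⟩
    split_ifs at hj with hb
    · left; omega
    · exact Or.inr ⟨by omega, hj ▸ hmem⟩
  · rintro (⟨hj, hk⟩ | ⟨hne, hmem⟩)
    · exact ⟨x, c, hxc, by rw [if_pos ⟨rfl, rfl⟩, hj], hk.symm⟩
    · exact ⟨j, k, hmem, by rw [if_neg (by omega)], rfl⟩

lemma kohnertMove_insert_erase {D : Finset (ℕ × ℕ)} {x c : ℕ} (hx : 1 ≤ x) (hxc : (x, c) ∈ D)
    (habove : (x + 1, c) ∉ D) (hright : ∀ k, (x + 1, k) ∈ D → k ≤ c) :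
    KohnertMove (insert (x + 1, c) (D.erase (x, c))) D := by
  refine ⟨x + 1, c, x, Finset.mem_insert_self _ _, ?_, hx, Nat.lt_succ_self x, ?_,
    fun _ _ _ => by omega, ?_⟩
  · intro k hk
    rcases Finset.mem_insert.mp hk with h | h
    · exact (Prod.mk.inj h).2.le
    · exact hright k (Finset.mem_of_mem_erase h)
  · simp
  · rw [Finset.erase_insert (fun h => habove (Finset.mem_of_mem_erase h)),
      Finset.insert_erase hxc]

def displacement (T : Finset (ℕ × ℕ × ℕ)) : ℕ := ∑ t ∈ T, (t.2.2 - t.1)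

lemma Finset.exists_topmost_leftmost (T : Finset (ℕ × ℕ × ℕ)) (P : ℕ × ℕ × ℕ → Prop)
    (hne : ∃ t ∈ T, P t) : ∃ t₀ ∈ T, P t₀ ∧ (∀ t ∈ T, P t → t.1 ≤ t₀.1) ∧
      ∀ t ∈ T, P t → t.1 = t₀.1 → t₀.2.1 ≤ t.2.1 := by
  obtain ⟨w, hw, hwP⟩ := hne
  obtain ⟨m, hm, hmax⟩ := (T.filter P).exists_max_image (·.1) ⟨w, Finset.mem_filter.mpr ⟨hw, hwP⟩⟩
  obtain ⟨t₀, ht₀, hmin⟩ := ((T.filter P).filter (·.1 = m.1)).exists_min_image (·.2.1)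
    ⟨m, Finset.mem_filter.mpr ⟨hm, rfl⟩⟩
  simp only [Finset.mem_filter] at hm ht₀ hmax hmin
  exact ⟨t₀, ht₀.1.1, ht₀.1.2, fun t ht hP => ht₀.2 ▸ hmax t ⟨ht, hP⟩,
    fun t ht hP hrow => hmin t ⟨⟨ht, hP⟩, hrow.trans ht₀.2⟩⟩

namespace IsLKTF

variable {a : List ℕ} {T : Finset (ℕ × ℕ × ℕ)}

lemma col_mem_range (h : IsLKTF a T) {t : ℕ × ℕ × ℕ} (ht : t ∈ T) :
    maxPart a - a.getD (t.2.2 - 1) 0 < t.2.1 ∧ t.2.1 ≤ maxPart a := by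
  have hlab := h.2.2.1 t ht
  have hcount := h.2.1 t.2.2 (Finset.mem_Icc.mpr ⟨hlab.2.2.1, hlab.2.2.2⟩) t.2.1
  have hpos : 0 < (T.filter fun s => s.2.1 = t.2.1 ∧ s.2.2 = t.2.2).card :=
    Finset.card_pos.mpr ⟨t, Finset.mem_filter.mpr ⟨ht, rfl, rfl⟩⟩
  by_contra hout
  rw [if_neg hout] at hcount
  omega

lemma eq_of_col_eq_of_label_eq (h : IsLKTF a T) {t t' : ℕ × ℕ × ℕ} (ht : t ∈ T)
    (ht' : t' ∈ T) (hcol : t.2.1 = t'.2.1) (hlab : t.2.2 = t'.2.2) : t = t' := by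
  have hl := h.2.2.1 t ht
  have hcount := h.2.1 t.2.2 (Finset.mem_Icc.mpr ⟨hl.2.2.1, hl.2.2.2⟩) t.2.1
  have hle : (T.filter fun s => s.2.1 = t.2.1 ∧ s.2.2 = t.2.2).card ≤ 1 := by
    rw [hcount]; split <;> omega
  exact Finset.card_le_one.mp hle t (Finset.mem_filter.mpr ⟨ht, rfl, rfl⟩)
    t' (Finset.mem_filter.mpr ⟨ht', hcol.symm, hlab.symm⟩)

lemma exists_of_mem_range (h : IsLKTF a T) {i c : ℕ} (hi : 1 ≤ i) (hin : i ≤ a.length)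
    (hc : maxPart a - a.getD (i - 1) 0 < c ∧ c ≤ maxPart a) :
    ∃ u ∈ T, u.2.1 = c ∧ u.2.2 = i := by
  have hcount := h.2.1 i (Finset.mem_Icc.mpr ⟨hi, hin⟩) c
  rw [if_pos hc] at hcount
  obtain ⟨u, hu⟩ := Finset.card_pos.mp (hcount ▸ Nat.one_pos)
  exact ⟨u, (Finset.mem_filter.mp hu).1, (Finset.mem_filter.mp hu).2⟩

lemma exists_label_of_col_le (h : IsLKTF a T) {t : ℕ × ℕ × ℕ} (ht : t ∈ T) {k : ℕ}
    (hk : t.2.1 ≤ k) (hk' : k ≤ maxPart a) : ∃ v ∈ T, v.2.1 = k ∧ v.2.2 = t.2.2 := by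
  have hl := h.2.2.1 t ht
  exact h.exists_of_mem_range hl.2.2.1 hl.2.2.2 ⟨(h.col_mem_range ht).1.trans_le hk, hk'⟩

lemma injOn_moveRows (h : IsLKTF a T) (ρ : ℕ → ℕ → ℕ) :
    Set.InjOn (fun t : ℕ × ℕ × ℕ => (ρ t.1 t.2.1, t.2)) T := fun _ ht _ ht' heq =>
  h.eq_of_col_eq_of_label_eq ht ht' (congrArg (·.2.1) heq) (congrArg (·.2.2) heq)

lemma sum_moveRows (h : IsLKTF a T) (ρ : ℕ → ℕ → ℕ) (f : ℕ × ℕ × ℕ → ℕ) :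
    ∑ t ∈ moveRows ρ T, f t = ∑ t ∈ T, f (ρ t.1 t.2.1, t.2) :=
  Finset.sum_image (h.injOn_moveRows ρ)

lemma moveRows (h : IsLKTF a T) (ρ : ℕ → ℕ → ℕ)
    (hmono : ∀ t ∈ T, ∀ t' ∈ T, t.2.1 = t'.2.1 → t.1 < t'.1 → ρ t.1 t.2.1 < ρ t'.1 t'.2.1)
    (hrow : ∀ t ∈ T, 1 ≤ ρ t.1 t.2.1 ∧ ρ t.1 t.2.1 ≤ t.2.2)
    (hdesc : ∀ t ∈ T, ∀ t' ∈ T, t.2.2 = t'.2.2 → t.2.1 < t'.2.1 →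
      ρ t'.1 t'.2.1 ≤ ρ t.1 t.2.1) :
    IsLKTF a (moveRows ρ T) := by
  obtain ⟨hcell, hcount, hlab, -, hcol⟩ := id h
  have hrow_lt : ∀ t ∈ T, ∀ t' ∈ T, t.2.1 = t'.2.1 → ρ t.1 t.2.1 < ρ t'.1 t'.2.1 →
      t.1 < t'.1 := by
    intro t ht t' ht' hc hlt
    rcases lt_trichotomy t.1 t'.1 with h | h | h
    · exact h
    · rw [hcell t ht t' ht' h hc] at hlt; omega
    · have := hmono t' ht' t ht hc.symm h; omega
  refine ⟨?_, ?_, ?_, ?_, ?_⟩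
  · simp only [_root_.moveRows, Finset.forall_mem_image]
    intro t ht t' ht' hr hc
    rcases lt_trichotomy t.1 t'.1 with h | h | h
    · have := hmono t ht t' ht' hc h; omega
    · rw [hcell t ht t' ht' h hc]
    · have := hmono t' ht' t ht hc.symm h; omega
  · intro i hi c
    rw [_root_.moveRows, Finset.filter_image,
      Finset.card_image_of_injOn ((h.injOn_moveRows ρ).mono (Finset.filter_subset _ _))]
    exact hcount i hi c
  · simp only [_root_.moveRows, Finset.forall_mem_image]
    exact fun t ht => ⟨(hrow t ht).1, (hrow t ht).2, (hlab t ht).2.2⟩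
  · simp only [_root_.moveRows, Finset.forall_mem_image]
    exact hdesc
  · simp only [_root_.moveRows, Finset.forall_mem_image]
    intro t ht t' ht' hc hlt
    exact hcol t ht t' ht' hc (hrow_lt t ht t' ht' hc hlt)

lemma exists_right_of_succ_row (h : IsLKTF a T) {u s u₂ : ℕ × ℕ × ℕ} (hu : u ∈ T) (hs : s ∈ T)
    (hu₂ : u₂ ∈ T) (hrow : s.1 = u.1) (hlab : s.2.2 = u.2.2) (hcol : u.2.1 < s.2.1)
    (hu₂col : u₂.2.1 = u.2.1) (hu₂row : u₂.1 = u.1 + 1) :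
    ∃ v ∈ T, v.1 = u₂.1 ∧ v.2.1 = s.2.1 ∧ v.2.2 = u₂.2.2 := by
  have hlab_lt : u.2.2 < u₂.2.2 := h.2.2.2.2 u hu u₂ hu₂ hu₂col.symm (by omega)
  obtain ⟨v, hv, hvcol, hvlab⟩ :=
    h.exists_label_of_col_le hu₂ (k := s.2.1) (by omega) (h.col_mem_range hs).2
  have hv_le : v.1 ≤ u₂.1 := h.2.2.2.1 u₂ hu₂ v hv hvlab.symm (by omega)
  refine ⟨v, hv, le_antisymm hv_le ?_, hvcol, hvlab⟩
  rcases lt_trichotomy v.1 s.1 with hvs | hvs | hvs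
  · have := h.2.2.2.2 v hv s hs (by omega) hvs
    omega
  · have := h.1 v hv s hs hvs (by omega)
    subst this
    omega
  · omega

/-- If `t'` were in the row of `t`, then row by row up to row `r` the label of the cell in
column `c` would also occur in the column of `t'`, giving row `r` a cell right of column `c`. -/
lemma row_lt_of_col_gt (h : IsLKTF a T) {r c : ℕ} {t t' : ℕ × ℕ × ℕ} (ht : t ∈ T)
    (htc : t.2.1 = c) (htr : t.1 ≤ r) (hfill : ∀ j, t.1 < j → j ≤ r → ∃ u ∈ T, u.1 = j ∧ u.2.1 = c)
    (hright : ∀ u ∈ T, u.1 = r → u.2.1 ≤ c) (ht' : t' ∈ T) (hlab : t'.2.2 = t.2.2)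
    (hcol : c < t'.2.1) : t'.1 < t.1 := by
  refine lt_of_le_of_ne (h.2.2.2.1 t ht t' ht' hlab.symm (by omega)) fun hrow => ?_
  have ladder : ∀ k, t.1 + k ≤ r → ∃ u ∈ T, ∃ s ∈ T, u.1 = t.1 + k ∧ u.2.1 = c ∧
      s.1 = t.1 + k ∧ s.2.1 = t'.2.1 ∧ s.2.2 = u.2.2 := by
    intro k
    induction k with
    | zero => exact fun _ => ⟨t, ht, t', ht', rfl, htc, hrow, rfl, hlab⟩
    | succ k ih =>
      intro hk
      obtain ⟨u, hu, s, hs, hurow, hucol, hsrow, hscol, hslab⟩ := ih (by omega)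
      obtain ⟨u₂, hu₂, hu₂row, hu₂col⟩ := hfill (t.1 + (k + 1)) (by omega) hk
      obtain ⟨v, hv, hvrow, hvcol, hvlab⟩ := h.exists_right_of_succ_row hu hs hu₂
        (by omega) hslab (by omega) (by omega) (by omega)
      exact ⟨u₂, hu₂, v, hv, hu₂row, hu₂col, by omega, by omega, hvlab⟩
  obtain ⟨-, -, s, hs, -, -, hsrow, hscol, -⟩ := ladder (r - t.1) (by omega)
  have := hright s hs (by omega)
  omega

lemma exists_of_kohnertMove (h : IsLKTF a T) {D' : Finset (ℕ × ℕ)}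
    (hm : KohnertMove (Tcells T) D') : ∃ T', IsLKTF a T' ∧ Tcells T' = D' := by
  obtain ⟨r, c, r', hrc, hright, hr', hr'r, hempty, hbetween, rfl⟩ := hm
  have hfill : ∀ j, r' < j → j ≤ r → ∃ u ∈ T, u.1 = j ∧ u.2.1 = c := fun j hj hj' =>
    mem_Tcells.mp ((lt_or_eq_of_le hj').elim (hbetween j hj) (· ▸ hrc))
  have hempty' : ∀ u ∈ T, u.2.1 = c → u.1 ≠ r' := fun u hu hc hr =>
    hempty (mem_Tcells.mpr ⟨u, hu, hr, hc⟩)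
  have hright' : ∀ u ∈ T, u.1 = r → u.2.1 ≤ c := fun u hu hr =>
    hright _ (mem_Tcells.mpr ⟨u, hu, hr, rfl⟩)
  refine ⟨_root_.moveRows (shiftDownBlock r' r c) T, h.moveRows _ ?_ ?_ ?_, ?_⟩
  · intro t ht t' ht' hc hlt
    have := hempty' t ht
    have := hempty' t' ht'
    unfold shiftDownBlock
    split_ifs <;> omega
  · intro t ht
    have := h.2.2.1 t ht
    unfold shiftDownBlock
    split_ifs <;> omega
  · intro t ht t' ht' hl hc
    have hold := h.2.2.2.1 t ht t' ht' hl hc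
    unfold shiftDownBlock
    by_cases hb : t.2.1 = c ∧ r' < t.1 ∧ t.1 ≤ r
    · have := h.row_lt_of_col_gt ht hb.1 hb.2.2 (fun j hj hj' => hfill j (by omega) hj')
        hright' ht' hl.symm (by omega)
      split_ifs <;> omega
    · split_ifs <;> omega
  · rw [Tcells_moveRows, insert_erase_eq_image_shiftDownBlock hr'r hrc hbetween]

lemma ne_succ_row_of_topmost (h : IsLKTF a T) {x c i : ℕ} (ht₀ : (x, c, i) ∈ T) (hlt : x < i)
    (htop : ∀ t ∈ T, t.1 < t.2.2 → t.1 ≤ x) : ∀ u ∈ T, u.2.1 = c → u.1 ≠ x + 1 := by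
  intro u hu hc hr
  have : i < u.2.2 := h.2.2.2.2 _ ht₀ u hu hc.symm (by dsimp only; omega)
  have := htop u hu (by omega)
  omega

lemma col_le_of_succ_row_of_topmost (h : IsLKTF a T) {x c i : ℕ} (ht₀ : (x, c, i) ∈ T)
    (hlt : x < i) (htop : ∀ t ∈ T, t.1 < t.2.2 → t.1 ≤ x) :
    ∀ u ∈ T, u.1 = x + 1 → u.2.1 ≤ c := by
  intro u hu hr
  by_contra! hc
  have hu_fixed : u.2.2 = x + 1 := by
    have := (h.2.2.1 u hu).2.1
    have := htop u hu
    omega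
  obtain ⟨v, hv, hvcol, hvlab⟩ :=
    h.exists_label_of_col_le ht₀ (k := u.2.1) hc.le (h.col_mem_range hu).2
  have hv_row : v.1 ≤ x := h.2.2.2.1 _ ht₀ v hv hvlab.symm (by dsimp only; omega)
  have : v.2.2 < u.2.2 := h.2.2.2.2 v hv u hu hvcol (by omega)
  dsimp only at hvlab
  omega

lemma exists_kohnertMove_to (h : IsLKTF a T) {x c i : ℕ} (ht₀ : (x, c, i) ∈ T) (hlt : x < i)
    (htop : ∀ t ∈ T, t.1 < t.2.2 → t.1 ≤ x)
    (hleft : ∀ t ∈ T, t.1 < t.2.2 → t.1 = x → c ≤ t.2.1) :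
    ∃ T', IsLKTF a T' ∧ KohnertMove (Tcells T') (Tcells T) ∧ displacement T' < displacement T := by
  obtain ⟨hcell, -, hlab, hdesc, -⟩ := id h
  have hlabel₀ : ∀ t ∈ T, t.1 = x → t.2.1 = c → t.2.2 = i := fun t ht hr hc => by
    rw [hcell t ht _ ht₀ hr hc]
  have habove := h.ne_succ_row_of_topmost ht₀ hlt htop
  have hright := h.col_le_of_succ_row_of_topmost ht₀ hlt htop
  have hbelow : ∀ u ∈ T, u.2.2 = i → u.2.1 < c → x < u.1 := by
    intro u hu hl hc
    have : x ≤ u.1 := hdesc u hu _ ht₀ hl hc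
    have := hleft u hu
    omega
  have hx : 1 ≤ x := (hlab _ ht₀).1
  have hxc : (x, c) ∈ Tcells T := mem_Tcells.mpr ⟨_, ht₀, rfl, rfl⟩
  refine ⟨_root_.moveRows (raiseCell x c) T, h.moveRows _ ?_ ?_ ?_, ?_, ?_⟩
  · intro t ht t' ht' hc hrow
    have := habove t' ht'
    unfold raiseCell
    split_ifs <;> omega
  · intro t ht
    have := hlab t ht
    have := hlabel₀ t ht
    unfold raiseCell
    split_ifs with hmoved
    · have := this hmoved.1 hmoved.2
      omega
    · omega
  · intro t ht t' ht' hl hc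
    have hold := hdesc t ht t' ht' hl hc
    unfold raiseCell
    split_ifs with h₁ h₂
    · omega
    · have := hbelow t ht (hl.trans (hlabel₀ t' ht' h₁.1 h₁.2)) (h₁.2 ▸ hc)
      omega
    · omega
    · omega
  · rw [Tcells_moveRows, image_raiseCell hxc]
    refine kohnertMove_insert_erase hx hxc (fun hmem => ?_) fun k hk => ?_
    · obtain ⟨u, hu, hr, hc⟩ := mem_Tcells.mp hmem
      exact habove u hu hc hr
    · obtain ⟨u, hu, hr, rfl⟩ := mem_Tcells.mp hk
      exact hright u hu hr
  · rw [displacement, displacement, h.sum_moveRows]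
    refine Finset.sum_lt_sum (fun t _ => ?_) ⟨_, ht₀, ?_⟩
    · dsimp only [raiseCell]
      split_ifs <;> omega
    · simp only [raiseCell, and_self, if_true]
      omega

lemma Tcells_eq_lockDiagram (h : IsLKTF a T) (hfixed : ∀ t ∈ T, t.2.2 = t.1) :
    Tcells T = lockDiagram a := by
  ext ⟨j, k⟩
  simp only [Tcells, Finset.mem_image, Prod.mk.injEq, mem_lockDiagram]
  constructor
  · rintro ⟨t, ht, rfl, rfl⟩
    have hrange := h.col_mem_range ht
    have := h.2.2.1 t ht
    rw [hfixed t ht] at hrange this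
    omega
  · rintro ⟨hj, hjn, hk⟩
    obtain ⟨u, hu, rfl, hlab⟩ := h.exists_of_mem_range hj hjn hk
    exact ⟨u, hu, by rw [← hfixed u hu, hlab], rfl⟩

lemma reflTransGen_kohnertMove (h : IsLKTF a T) :
    Relation.ReflTransGen KohnertMove (lockDiagram a) (Tcells T) := by
  induction hn : displacement T using Nat.strong_induction_on generalizing T with
  | _ n ih =>
    by_cases hne : ∃ t ∈ T, t.1 < t.2.2
    · obtain ⟨t₀, ht₀, hlt, htop, hleft⟩ := T.exists_topmost_leftmost _ hne
      obtain ⟨T', hT', hmove, hdisp⟩ := h.exists_kohnertMove_to ht₀ hlt htop hleft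
      exact (ih _ (hn ▸ hdisp) hT' rfl).tail hmove
    · push Not at hne
      rw [h.Tcells_eq_lockDiagram fun t ht => le_antisymm (hne t ht) (h.2.2.1 t ht).2.1]

end IsLKTF

lemma isLKTF_lockDiagram (a : List ℕ) :
    IsLKTF a ((lockDiagram a).image fun p => (p.1, p.2, p.1)) := by
  have hcells : ∀ t ∈ (lockDiagram a).image (fun p => (p.1, p.2, p.1)),
      t.2.2 = t.1 ∧ (t.1, t.2.1) ∈ lockDiagram a := by
    intro t ht
    obtain ⟨p, hp, rfl⟩ := Finset.mem_image.mp ht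
    exact ⟨rfl, hp⟩
  refine ⟨?_, fun i hi c => ?_, ?_, ?_, ?_⟩
  · simp only [Finset.forall_mem_image]
    intro p _ q _ h1 h2
    rw [h1, h2]
  · have hfilter : ((lockDiagram a).image fun p => (p.1, p.2, p.1)).filter
        (fun t => t.2.1 = c ∧ t.2.2 = i) =
        ((lockDiagram a).image fun p => (p.1, p.2, p.1)).filter (fun t => t = (i, c, i)) := by
      refine Finset.filter_congr fun t ht => ?_
      obtain ⟨hrow, -⟩ := hcells t ht
      constructor
      · rintro ⟨hc, hl⟩; ext <;> simp_all
      · rintro rfl; simp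
    have hmem : (i, c, i) ∈ (lockDiagram a).image (fun p => (p.1, p.2, p.1)) ↔
        maxPart a - a.getD (i - 1) 0 < c ∧ c ≤ maxPart a := by
      simp only [Finset.mem_image, Prod.mk.injEq, Prod.exists, mem_lockDiagram]
      have := Finset.mem_Icc.mp hi
      constructor
      · rintro ⟨j, k, ⟨-, -, hk⟩, rfl, rfl, -⟩; exact hk
      · intro hc; exact ⟨i, c, ⟨this.1, this.2, hc⟩, rfl, rfl, rfl⟩
    rw [hfilter, Finset.filter_eq', apply_ite Finset.card, Finset.card_singleton,
      Finset.card_empty]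
    exact if_congr hmem rfl rfl
  · intro t ht
    obtain ⟨hl, hmem⟩ := hcells t ht
    have := mem_lockDiagram.mp hmem
    omega
  · intro t ht t' ht' hl _
    rw [(hcells t ht).1, (hcells t' ht').1] at hl
    exact hl.ge
  · intro t ht t' ht' _ hr
    rw [(hcells t ht).1, (hcells t' ht').1]
    exact hr

lemma Tcells_image_lockDiagram (a : List ℕ) :
    Tcells ((lockDiagram a).image fun p => (p.1, p.2, p.1)) = lockDiagram a := by
  simp [Tcells, Finset.image_image, Function.comp_def]

/-- The set of underlying diagrams of lock Kohnert tableaux of content `a` is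
closed under Kohnert moves, and equals the set of lock Kohnert diagrams of `a`. -/
theorem lkt_diagrams_closed_and_eq (a : List ℕ) :
    (∀ T : Finset (ℕ × ℕ × ℕ), ∀ D' : Finset (ℕ × ℕ), IsLKTF a T →
        KohnertMove (Tcells T) D' → ∃ T', IsLKTF a T' ∧ Tcells T' = D') ∧
      {D : Finset (ℕ × ℕ) | ∃ T, IsLKTF a T ∧ Tcells T = D} =
        {D : Finset (ℕ × ℕ) | Relation.ReflTransGen KohnertMove (lockDiagram a) D} := by
  have closed : ∀ T : Finset (ℕ × ℕ × ℕ), ∀ D' : Finset (ℕ × ℕ), IsLKTF a T →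
      KohnertMove (Tcells T) D' → ∃ T', IsLKTF a T' ∧ Tcells T' = D' :=
    fun _ _ h hm => h.exists_of_kohnertMove hm
  refine ⟨closed, Set.ext fun D => ⟨?_, fun hD => ?_⟩⟩
  · rintro ⟨T, hT, rfl⟩
    exact hT.reflTransGen_kohnertMove
  · induction hD with
    | refl => exact ⟨_, isLKTF_lockDiagram a, Tcells_image_lockDiagram a⟩
    | tail _ hmove ih =>
      obtain ⟨T, hT, rfl⟩ := ih
      exact closed T _ hT hmove
end

section
/- Vertical i-pairing is well-defined and the raising operator e_i on diagrams, which pushes the rightmost vertically unpaired box in row i+1 down to row i, is injective on the set of diagrams where it is nonzero: if e_i(D) = e_i(D') ≠ 0 then D = D'. -/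
open scoped Classical

/-- The boxes matched by a partial matching. -/
def matchedBoxes (M : Finset ((ℕ × ℕ) × (ℕ × ℕ))) : Finset (ℕ × ℕ) :=
  M.image Prod.fst ∪ M.image Prod.snd

/-- Initial vertical `i`-pairing: pair any boxes of rows `i` and `i+1` in the
same column. -/
def vInit (i : ℕ) (D : Finset (ℕ × ℕ)) : Finset ((ℕ × ℕ) × (ℕ × ℕ)) :=
  (D.filter (fun p => p.1 = i + 1 ∧ (i, p.2) ∈ D)).image (fun p => (p, (i, p.2)))

/-- One step of the iterative vertical `i`-pairing: pair an unpaired box of row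
`i+1` with the rightmost unpaired box of row `i` in a column to its left,
provided all boxes of rows `i`, `i+1` in the columns strictly between them are
already paired. -/
def VStep (i : ℕ) (D : Finset (ℕ × ℕ)) (M M' : Finset ((ℕ × ℕ) × (ℕ × ℕ))) : Prop :=
  ∃ cx cy, (i + 1, cx) ∈ D ∧ (i, cy) ∈ D ∧ cy < cx ∧
    (i + 1, cx) ∉ matchedBoxes M ∧ (i, cy) ∉ matchedBoxes M ∧
    (∀ p ∈ D, (p.1 = i ∨ p.1 = i + 1) → cy < p.2 → p.2 < cx → p ∈ matchedBoxes M) ∧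
    M' = insert ((i + 1, cx), (i, cy)) M

/-- The vertical `i`-pairing of `D`: a matching obtained from the same-column
pairing by iterating `VStep` until no further step applies. -/
def VOutcome (i : ℕ) (D : Finset (ℕ × ℕ)) (M : Finset ((ℕ × ℕ) × (ℕ × ℕ))) : Prop :=
  Relation.ReflTransGen (VStep i D) (vInit i D) M ∧ ∀ M', ¬ VStep i D M M'

/-- The raising operator `e_i` as a relation: `RaiseRel i D D'` holds when `D'`
is obtained from `D` by pushing the rightmost vertically unpaired box of row
`i+1` down to row `i` (`e_i(D) = 0` corresponds to no `D'` existing). -/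
def RaiseRel (i : ℕ) (D D' : Finset (ℕ × ℕ)) : Prop :=
  ∃ M c, VOutcome i D M ∧ (i + 1, c) ∈ D ∧ (i + 1, c) ∉ matchedBoxes M ∧
    (∀ c', (i + 1, c') ∈ D → (i + 1, c') ∉ matchedBoxes M → c' ≤ c) ∧
    D' = insert (i, c) (D.erase (i + 1, c))

/-! Vertical pairing terminates because every step adds a new pair from `D × D`, and it is confluent
because two steps available at the same time either coincide or pair boxes in disjoint column
ranges (a box strictly inside a step's range is already paired), so they commute.
For injectivity, the box that `e_i` moves down to `(i, c)` is unpaired, so no pairing step ever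
spans column `c`, and the pairing of `e_i(D)` is the pairing of `D`. Since every unpaired box of
row `i + 1` lies left of every unpaired box of row `i`, the box `(i, c)` is the leftmost unpaired
box of row `i` in `e_i(D)`, and moving it back up recovers `D`. -/

namespace Relation

variable {α : Type*} {r : α → α → Prop}

theorem exists_reflTransGen_forall_not (hr : WellFounded (flip r)) (a : α) :
    ∃ b, ReflTransGen r a b ∧ ∀ c, ¬ r b c := by
  induction a using hr.induction with
  | _ a ih =>
    by_cases h : ∃ b, r a b
    · obtain ⟨b, hab⟩ := h
      obtain ⟨c, hbc, hc⟩ := ih b hab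
      exact ⟨c, .head hab hbc, hc⟩
    · exact ⟨a, .refl, fun c hc => h ⟨c, hc⟩⟩

theorem ReflTransGen.eq_of_forall_not
    (hr : ∀ a b c, r a b → r a c → ∃ d, ReflGen r b d ∧ ReflTransGen r c d) {a b c : α}
    (hab : ReflTransGen r a b) (hac : ReflTransGen r a c) (hb : ∀ d, ¬ r b d)
    (hc : ∀ d, ¬ r c d) : b = c := by
  obtain ⟨d, hbd, hcd⟩ := church_rosser hr hab hac
  have eq_of_irreducible : ∀ {x}, (∀ y, ¬ r x y) → ReflTransGen r x d → x = d := fun hx hxd =>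
    hxd.cases_head.resolve_right fun ⟨y, hxy, _⟩ => hx y hxy
  rw [eq_of_irreducible hb hbd, eq_of_irreducible hc hcd]

theorem ReflTransGen.mono_below {β : Type*} [Preorder β] {r s : β → β → Prop} {a m : β}
    (hr : ∀ x y, r x y → x ≤ y) (hrs : ∀ x y, r x y → y ≤ m → s x y)
    (h : ReflTransGen r a m) : ReflTransGen s a m := by
  suffices ∀ b, ReflTransGen r a b → b ≤ m → ReflTransGen s a b from this m h le_rfl
  intro b hab
  induction hab with
  | refl => exact fun _ => .refl
  | tail _ hbc ih => exact fun hcm => (ih ((hr _ _ hbc).trans hcm)).tail (hrs _ _ hbc hcm)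

end Relation

open Relation

section VerticalPairing

variable {i c : ℕ} {D E : Finset (ℕ × ℕ)} {M N : Finset ((ℕ × ℕ) × (ℕ × ℕ))}

lemma matchedBoxes_insert (q : (ℕ × ℕ) × (ℕ × ℕ)) (M : Finset ((ℕ × ℕ) × (ℕ × ℕ))) :
    matchedBoxes (insert q M) = insert q.1 (insert q.2 (matchedBoxes M)) := by
  ext x
  simp only [matchedBoxes, Finset.image_insert, Finset.mem_union, Finset.mem_insert]
  tauto

lemma matchedBoxes_mono : Monotone matchedBoxes := fun _ _ h =>
  Finset.union_subset_union (Finset.image_subset_image h) (Finset.image_subset_image h)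

lemma fst_mem_matchedBoxes {q : (ℕ × ℕ) × (ℕ × ℕ)} (hq : q ∈ M) : q.1 ∈ matchedBoxes M :=
  Finset.mem_union_left _ (Finset.mem_image_of_mem _ hq)

lemma matchedBoxes_subset_of_subset_product (h : M ⊆ D ×ˢ D) : matchedBoxes M ⊆ D :=
  Finset.union_subset
    ((Finset.image_subset_image h).trans Finset.subset_product_image_fst)
    ((Finset.image_subset_image h).trans Finset.subset_product_image_snd)

lemma mem_vInit {q : (ℕ × ℕ) × (ℕ × ℕ)} :
    q ∈ vInit i D ↔ ∃ c, (i + 1, c) ∈ D ∧ (i, c) ∈ D ∧ q = ((i + 1, c), (i, c)) := by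
  simp only [vInit, Finset.mem_image, Finset.mem_filter]
  constructor
  · rintro ⟨⟨r, c⟩, ⟨hp, rfl, hc⟩, rfl⟩
    exact ⟨c, hp, hc, rfl⟩
  · rintro ⟨c, hx, hy, rfl⟩
    exact ⟨(i + 1, c), ⟨hx, rfl, hy⟩, rfl⟩

lemma VStep.subset (h : VStep i D M N) : M ⊆ N := by
  obtain ⟨_, _, _, _, _, _, _, _, rfl⟩ := h
  exact Finset.subset_insert _ _

lemma VStep.card_sdiff_lt (h : VStep i D M N) : (D ×ˢ D \ N).card < (D ×ˢ D \ M).card := by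
  obtain ⟨cx, cy, hx, hy, -, hu, -, -, rfl⟩ := h
  rw [Finset.sdiff_insert]
  exact Finset.card_erase_lt_of_mem <|
    Finset.mem_sdiff.2 ⟨Finset.mem_product.2 ⟨hx, hy⟩, fun hq => hu (fst_mem_matchedBoxes hq)⟩

lemma wellFounded_flip_vStep : WellFounded (flip (VStep i D)) :=
  Subrelation.wf (fun h => h.card_sdiff_lt) (measure fun M => (D ×ˢ D \ M).card).wf

lemma exists_vOutcome (i : ℕ) (D : Finset (ℕ × ℕ)) : ∃ M, VOutcome i D M :=
  exists_reflTransGen_forall_not wellFounded_flip_vStep _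

lemma vStep_diamond {M₁ M₂ : Finset ((ℕ × ℕ) × (ℕ × ℕ))} (h₁ : VStep i D M M₁)
    (h₂ : VStep i D M M₂) : M₁ = M₂ ∨ ∃ N, VStep i D M₁ N ∧ VStep i D M₂ N := by
  obtain ⟨cx₁, cy₁, hx₁, hy₁, hlt₁, hu₁, hv₁, hb₁, rfl⟩ := h₁
  obtain ⟨cx₂, cy₂, hx₂, hy₂, hlt₂, hu₂, hv₂, hb₂, rfl⟩ := h₂
  wlog hle : cx₁ ≤ cx₂ generalizing cx₁ cy₁ cx₂ cy₂
  · refine (this cx₂ cy₂ hx₂ hy₂ hlt₂ hu₂ hv₂ hb₂ cx₁ cy₁ hx₁ hy₁ hlt₁ hu₁ hv₁ hb₁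
      (by omega)).imp Eq.symm fun ⟨N, h₂, h₁⟩ => ⟨N, h₁, h₂⟩
  rcases hle.lt_or_eq with hlt | rfl
  · have hcx₁ : cx₁ ≤ cy₂ := by
      by_contra! h
      exact hu₁ (hb₂ _ hx₁ (Or.inr rfl) h hlt)
    refine Or.inr ⟨_, ⟨cx₂, cy₂, hx₂, hy₂, hlt₂, ?_, ?_, fun p hp hr h h' =>
      matchedBoxes_mono (Finset.subset_insert _ _) (hb₂ p hp hr h h'), rfl⟩,
      ⟨cx₁, cy₁, hx₁, hy₁, hlt₁, ?_, ?_, fun p hp hr h h' =>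
      matchedBoxes_mono (Finset.subset_insert _ _) (hb₁ p hp hr h h'), Finset.insert_comm _ _ _⟩⟩
    all_goals
      simp only [matchedBoxes_insert, Finset.mem_insert, Prod.mk.injEq, hu₁, hu₂, hv₁, hv₂,
        or_false]
      omega
  · obtain rfl : cy₁ = cy₂ := by
      by_contra hne
      rcases Nat.lt_or_gt_of_ne hne with h | h
      · exact hv₂ (hb₁ _ hy₂ (Or.inl rfl) h hlt₂)
      · exact hv₁ (hb₂ _ hy₁ (Or.inl rfl) h hlt₁)
    exact Or.inl rfl

lemma VOutcome.unique (h₁ : VOutcome i D M) (h₂ : VOutcome i D N) : M = N := by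
  refine h₁.1.eq_of_forall_not (fun _ _ _ hab hac => ?_) h₂.1 h₁.2 h₂.2
  rcases vStep_diamond hab hac with rfl | ⟨d, hbd, hcd⟩
  · exact ⟨_, .refl, .refl⟩
  · exact ⟨d, .single hbd, .single hcd⟩

lemma VOutcome.vInit_subset (hM : VOutcome i D M) : vInit i D ⊆ M :=
  reflTransGen_le_of_le (r := (· ⊆ ·)) (fun _ _ h => h.subset) _ _ hM.1

lemma VOutcome.matchedBoxes_subset (hM : VOutcome i D M) : matchedBoxes M ⊆ D := by
  refine matchedBoxes_subset_of_subset_product ?_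
  obtain ⟨hreach, -⟩ := hM
  induction hreach with
  | refl =>
    intro q hq
    obtain ⟨c, hx, hy, rfl⟩ := mem_vInit.1 hq
    exact Finset.mem_product.2 ⟨hx, hy⟩
  | tail _ hstep ih =>
    obtain ⟨cx, cy, hx, hy, -, -, -, -, rfl⟩ := hstep
    exact Finset.insert_subset (Finset.mem_product.2 ⟨hx, hy⟩) ih

lemma VOutcome.lt_of_notMem_matchedBoxes (hM : VOutcome i D M) {cx cy : ℕ}
    (hx : (i + 1, cx) ∈ D) (hy : (i, cy) ∈ D) (hux : (i + 1, cx) ∉ matchedBoxes M)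
    (huy : (i, cy) ∉ matchedBoxes M) : cx < cy := by
  induction h : cx - cy using Nat.strong_induction_on generalizing cx cy with
  | _ n ih =>
    by_contra! hle
    rcases hle.lt_or_eq with hlt | rfl
    · by_cases hb : ∀ p ∈ D, (p.1 = i ∨ p.1 = i + 1) → cy < p.2 → p.2 < cx → p ∈ matchedBoxes M
      · exact hM.2 _ ⟨cx, cy, hx, hy, hlt, hux, huy, hb, rfl⟩
      · push Not at hb
        obtain ⟨⟨r, b⟩, hp, rfl | rfl, hyb, hbx, hu⟩ := hb
        · exact absurd (ih (cx - b) (by omega) hx hp hux hu rfl) (by omega)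
        · exact absurd (ih (b - cy) (by omega) hp hy hu huy rfl) (by omega)
    · exact hux (fst_mem_matchedBoxes (hM.vInit_subset (mem_vInit.2 ⟨cy, hx, hy, rfl⟩)))

lemma vInit_subset_of_agreeOffColumn (hDE : ∀ p : ℕ × ℕ, p.2 ≠ c → (p ∈ D ↔ p ∈ E))
    (hD : (i, c) ∉ D ∨ (i + 1, c) ∉ D) :
    vInit i D ⊆ vInit i E := by
  intro q hq
  obtain ⟨c', hx, hy, rfl⟩ := mem_vInit.1 hq
  have hc' : c' ≠ c := by rintro rfl; tauto
  exact mem_vInit.2 ⟨c', (hDE _ hc').1 hx, (hDE _ hc').1 hy, rfl⟩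

-- a step spanning column `c` would need the box of `D` in that column to be paired already
lemma vStep_of_agreeOffColumn (hDE : ∀ p : ℕ × ℕ, p.2 ≠ c → (p ∈ D ↔ p ∈ E))
    (hD : (i, c) ∈ D ∨ (i + 1, c) ∈ D)
    (hi : (i, c) ∉ matchedBoxes N) (hi₁ : (i + 1, c) ∉ matchedBoxes N) (h : VStep i D M N) :
    VStep i E M N := by
  obtain ⟨cx, cy, hx, hy, hlt, hu, hv, hb, rfl⟩ := h
  simp only [matchedBoxes_insert, Finset.mem_insert, Prod.mk.injEq, true_and, not_or] at hi hi₁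
  refine ⟨cx, cy, (hDE _ (Ne.symm hi₁.1)).1 hx, (hDE _ (Ne.symm hi.2.1)).1 hy, hlt, hu, hv,
    fun p hp hr hyp hpx => ?_, rfl⟩
  by_cases hpc : p.2 = c
  · exfalso
    rcases hD with h | h
    · exact hi.2.2 (hb _ h (Or.inl rfl) (hpc ▸ hyp) (hpc ▸ hpx))
    · exact hi₁.2.2 (hb _ h (Or.inr rfl) (hpc ▸ hyp) (hpc ▸ hpx))
  · exact hb p ((hDE p hpc).2 hp) hr hyp hpx

/-- The lowering operator `f_i`, moving the leftmost unpaired box of row `i` up to row `i + 1`. -/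
def LowerRel (i : ℕ) (E D : Finset (ℕ × ℕ)) : Prop :=
  ∃ M c, VOutcome i E M ∧ (i, c) ∈ E ∧ (i, c) ∉ matchedBoxes M ∧
    (∀ c', (i, c') ∈ E → (i, c') ∉ matchedBoxes M → c ≤ c') ∧
    D = insert (i + 1, c) (E.erase (i, c))

lemma LowerRel.unique {D' : Finset (ℕ × ℕ)} (h : LowerRel i E D) (h' : LowerRel i E D') :
    D = D' := by
  obtain ⟨M, c, hM, hc, hcu, hleft, rfl⟩ := h
  obtain ⟨M', c', hM', hc', hcu', hleft', rfl⟩ := h'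
  obtain rfl := hM.unique hM'
  obtain rfl := le_antisymm (hleft c' hc' hcu') (hleft' c hc hcu)
  rfl

lemma RaiseRel.lowerRel (h : RaiseRel i D E) : LowerRel i E D := by
  obtain ⟨M, c, hM, hcD, hcu, hright, rfl⟩ := h
  have hicD : (i, c) ∉ D := fun h =>
    hcu (fst_mem_matchedBoxes (hM.vInit_subset (mem_vInit.2 ⟨c, hcD, h, rfl⟩)))
  have hicu : (i, c) ∉ matchedBoxes M := fun h => hicD (hM.matchedBoxes_subset h)
  set E := insert (i, c) (D.erase (i + 1, c))
  have hiE : (i, c) ∈ E := Finset.mem_insert_self _ _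
  have hi₁E : (i + 1, c) ∉ E := by simp [E]
  have hDE : ∀ p : ℕ × ℕ, p.2 ≠ c → (p ∈ D ↔ p ∈ E) := by
    rintro ⟨r, b⟩ (hb : b ≠ c)
    simp [E, hb]
  have hED : ∀ p : ℕ × ℕ, p.2 ≠ c → (p ∈ E ↔ p ∈ D) := fun p hp => (hDE p hp).symm
  have hvInit : vInit i E = vInit i D :=
    (vInit_subset_of_agreeOffColumn hED (Or.inr hi₁E)).antisymm
      (vInit_subset_of_agreeOffColumn hDE (Or.inl hicD))
  refine ⟨M, c, ⟨?_, ?_⟩, hiE, hicu, ?_, ?_⟩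
  · rw [hvInit]
    exact hM.1.mono_below (fun _ _ h => h.subset) fun _ _ hAB hBM =>
      vStep_of_agreeOffColumn hDE (Or.inr hcD) (fun h => hicu (matchedBoxes_mono hBM h))
        (fun h => hcu (matchedBoxes_mono hBM h)) hAB
  · rintro _ ⟨cx, cy, hx, hy, hlt, hu, hv, hb, rfl⟩
    have hcx : cx ≠ c := by rintro rfl; exact hi₁E hx
    rcases eq_or_ne cy c with rfl | hcy
    · exact absurd (hright cx ((hDE _ hcx).2 hx) hu) (by omega)
    · refine hM.2 _ (vStep_of_agreeOffColumn hED (Or.inl hiE) ?_ ?_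
        ⟨cx, cy, hx, hy, hlt, hu, hv, hb, rfl⟩)
      all_goals
        simp only [matchedBoxes_insert, Finset.mem_insert, Prod.mk.injEq, hicu, hcu, or_false]
        omega
  · intro b hb hbu
    rcases eq_or_ne b c with rfl | hbc
    · exact le_rfl
    · exact (hM.lt_of_notMem_matchedBoxes hcD ((hDE _ hbc).2 hb) hcu hbu).le
  · rw [Finset.erase_insert (by simp [hicD]), Finset.insert_erase hcD]

end VerticalPairing

theorem vertical_pairing_wellDefined_and_raise_injective_general (i : ℕ) :
    (∀ D : Finset (ℕ × ℕ), ∃! M, VOutcome i D M) ∧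
      (∀ D D' E : Finset (ℕ × ℕ), RaiseRel i D E → RaiseRel i D' E → D = D') :=
  ⟨fun D => (exists_vOutcome i D).imp fun _ hM => ⟨hM, fun _ hN => hN.unique hM⟩,
    fun _ _ _ h h' => h.lowerRel.unique h'.lowerRel⟩

/-- Vertical `i`-pairing is well-defined (the iterative process has a unique
outcome), and the raising operator `e_i` is injective where it is nonzero. -/
theorem vertical_pairing_wellDefined_and_raise_injective (i : ℕ) (hi : 1 ≤ i) :
    (∀ D : Finset (ℕ × ℕ), ∃! M, VOutcome i D M) ∧
      (∀ D D' E : Finset (ℕ × ℕ), RaiseRel i D E → RaiseRel i D' E → D = D') :=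
  vertical_pairing_wellDefined_and_raise_injective_general i
end
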